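/- arXiv:2208.08421 — 7 statements merged into one kernel-verified Lean document; each statement's English description precedes it below -/
import Mathlib

section
/- For any nonnegative integers k and n with n ≤ k, the sum S₁ = Σ_{j=0}^{k} (-1)^j (2k-j)! / ((2k-j-n)! · j! · (k-j)!) equals 0 if n < k, and equals 1 if n = k. -/
/-! Each term is n!/k! · (-1)^j C(k, j) C(2k - j, n). Substituting j ↦ k - j turns the sum of
(-1)^j C(k, j) C(2k - j, n) into the k-th forward difference of x ↦ C(x, n) at x = k. Since
Δ C(x, m + 1) = C(x, m), the n-th difference is the constant 1, so the k-th is 0 for n < k and 1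
for n = k. -/

open Finset Nat
open scoped fwdDiff

theorem fwdDiff_iter_choose_of_le {n k : ℕ} (hnk : n ≤ k) (y : ℕ) :
    (Δ_[1])^[k] (fun x ↦ x.choose n : ℕ → ℤ) y = if n < k then 0 else 1 := by
  obtain ⟨m, rfl⟩ := Nat.exists_eq_add_of_le hnk
  have h := fwdDiff_iter_choose 0 n
  rw [add_zero] at h
  rw [add_comm n m, Function.iterate_add_apply, h]
  rcases m with _ | m
  · simp
  · simp only [choose_zero_right, cast_one, Function.iterate_succ_apply, fwdDiff_const]
    simp [fwdDiff_iter_eq_sum_shift]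

theorem sum_range_alternating_choose_mul_choose {n k : ℕ} (hnk : n ≤ k) (y : ℕ) :
    ∑ j ∈ range (k + 1), (-1 : ℤ) ^ j * k.choose j * (y + (k - j)).choose n =
      if n < k then 0 else 1 := by
  rw [← fwdDiff_iter_choose_of_le hnk y, fwdDiff_iter_eq_sum_shift, ← sum_range_reflect]
  refine sum_congr rfl fun j hj ↦ ?_
  have hjk : j ≤ k := Nat.lt_succ_iff.mp (mem_range.mp hj)
  simp [Nat.sub_sub_self hjk, choose_symm hjk]

theorem cast_factorial_div_factorial_mul_factorial_mul_factorial {K : Type*} [Field K] [CharZero K]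
    {a n j k : ℕ} (hna : n ≤ a) (hjk : j ≤ k) :
    (a ! : K) / ((a - n)! * j ! * (k - j)!) = n ! / k ! * (a.choose n * k.choose j) := by
  rw [Nat.cast_choose K hna, Nat.cast_choose K hjk]
  field_simp [Nat.factorial_ne_zero]

theorem stmt0 (k n : ℕ) (hnk : n ≤ k) :
    ∑ j ∈ Finset.range (k + 1),
      (-1 : ℝ) ^ j * (Nat.factorial (2 * k - j)) /
        ((Nat.factorial (2 * k - j - n)) * (Nat.factorial j) * (Nat.factorial (k - j)))
      = if n < k then 0 else 1 := by
  have hterm : ∀ j ∈ range (k + 1),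
      (-1 : ℝ) ^ j * (2 * k - j)! / ((2 * k - j - n)! * j ! * (k - j)!) =
        n ! / k ! * (((-1 : ℤ) ^ j * k.choose j * (k + (k - j)).choose n : ℤ) : ℝ) := by
    intro j hj
    have hjk : j ≤ k := Nat.lt_succ_iff.mp (mem_range.mp hj)
    rw [mul_div_assoc, cast_factorial_div_factorial_mul_factorial_mul_factorial (by omega) hjk,
      show 2 * k - j = k + (k - j) by omega]
    push_cast
    ring
  rw [sum_congr rfl hterm, ← mul_sum, ← Int.cast_sum, sum_range_alternating_choose_mul_choose hnk]
  rcases hnk.lt_or_eq with hlt | rfl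
  · simp [hlt]
  · simp [Nat.factorial_ne_zero]
end

section
/- For any nonnegative integers k ≥ 1 and n ≤ k, the sum S₂ = Σ_{j=0}^{k} (-1)^j j (2k-j)! / ((2k-j-n)! · j! · (k-j)!) equals 0 if n < k-1, equals -1 if n = k-1, and equals -k² if n = k. -/
/-!
Writing `(2k-j)! / ((2k-j-n)! j! (k-j)!) = (n!/k!) C(k,j) C(2k-j,n)`, the sum becomes
`(n!/k!) Σ (-1)^j j C(k,j) C(2k-j,n)`. Absorbing `j C(k,j) = k C(k-1,j-1)` reduces this to
`-k Σ_i (-1)^i C(k-1,i) C(2k-1-i,n)`, and `Σ_i (-1)^i C(m,i) C(M-i,n) = C(M-m, n-m)` is the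
coefficient of `X^n` in `((1+X) - 1)^m (1+X)^(M-m) = X^m (1+X)^(M-m)`. Here this is `C(k, n-k+1)`,
which vanishes for `n < k-1` and is `1` resp. `k` for `n = k-1` resp. `n = k`.
-/

open Finset Polynomial

section AlternatingChoose

variable {R : Type*} [CommRing R]

theorem sum_range_C_neg_one_pow_mul_choose_mul_one_add_X_pow {m M : ℕ} (h : m ≤ M) :
    ∑ i ∈ range (m + 1), C ((-1 : R) ^ i * m.choose i) * (1 + X) ^ (M - i)
      = X ^ m * (1 + X) ^ (M - m) := by
  have hX : (X : R[X]) = -1 + (1 + X) := by ring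
  conv_rhs => rw [hX, add_pow, sum_mul]
  refine sum_congr rfl fun i hi => ?_
  have hM : M - i = (m - i) + (M - m) := by have := mem_range.1 hi; omega
  rw [hM, pow_add]
  simp only [map_mul, map_pow, map_neg, map_one, map_natCast]
  ring

theorem sum_range_neg_one_pow_mul_choose_mul_choose_sub {m M : ℕ} (h : m ≤ M) (n : ℕ) :
    ∑ i ∈ range (m + 1), (-1 : R) ^ i * m.choose i * (M - i).choose n
      = if m ≤ n then ((M - m).choose (n - m) : R) else 0 := by
  have := congrArg (coeff · n) (sum_range_C_neg_one_pow_mul_choose_mul_one_add_X_pow (R := R) h)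
  simpa only [finsetSum_coeff, coeff_C_mul, coeff_one_add_X_pow, coeff_X_pow_mul',
    apply_ite (coeff · (n - m)), coeff_zero] using this

theorem sum_range_neg_one_pow_mul_mul_choose_succ (m : ℕ) (f : ℕ → R) :
    ∑ j ∈ range (m + 2), (-1 : R) ^ j * j * (m + 1).choose j * f j
      = -(m + 1) * ∑ i ∈ range (m + 1), (-1 : R) ^ i * m.choose i * f (i + 1) := by
  rw [sum_range_succ', mul_sum]
  simp only [Nat.cast_zero, mul_zero, zero_mul, add_zero]
  refine sum_congr rfl fun i _ => ?_
  have habsorb := congrArg (Nat.cast : ℕ → R) (Nat.add_one_mul_choose_eq m i)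
  push_cast at habsorb ⊢
  linear_combination ((-1 : R) ^ i * f (i + 1)) * habsorb

theorem sum_range_neg_one_pow_mul_mul_choose_mul_choose_two_mul_sub (m n : ℕ) :
    ∑ j ∈ range (m + 2), (-1 : R) ^ j * j * (m + 1).choose j * (2 * (m + 1) - j).choose n
      = -(m + 1) * if m ≤ n then ((m + 1).choose (n - m) : R) else 0 := by
  rw [sum_range_neg_one_pow_mul_mul_choose_succ]
  simp only [show ∀ i, 2 * (m + 1) - (i + 1) = 2 * m + 1 - i by omega]
  rw [sum_range_neg_one_pow_mul_choose_mul_choose_sub (by omega),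
    show 2 * m + 1 - m = m + 1 by omega]

end AlternatingChoose

theorem factorial_div_factorial_mul_factorial_mul_factorial {a n k j : ℕ} (hn : n ≤ a)
    (hj : j ≤ k) :
    (a.factorial : ℝ) / ((a - n).factorial * j.factorial * (k - j).factorial)
      = n.factorial / k.factorial * (k.choose j * a.choose n) := by
  rw [Nat.cast_choose ℝ hn, Nat.cast_choose ℝ hj]
  field_simp

theorem stmt1 (k n : ℕ) (hk : 1 ≤ k) (hnk : n ≤ k) :
    ∑ j ∈ Finset.range (k + 1),
      (-1 : ℝ) ^ j * (j : ℝ) * (Nat.factorial (2 * k - j)) /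
        ((Nat.factorial (2 * k - j - n)) * (Nat.factorial j) * (Nat.factorial (k - j)))
      = if n < k - 1 then 0 else if n = k - 1 then -1 else -(k : ℝ) ^ 2 := by
  obtain ⟨m, rfl⟩ : ∃ m, k = m + 1 := ⟨k - 1, by omega⟩
  have hterm : ∀ j ∈ range (m + 2),
      (-1 : ℝ) ^ j * j * (2 * (m + 1) - j).factorial /
          ((2 * (m + 1) - j - n).factorial * j.factorial * (m + 1 - j).factorial)
        = n.factorial / (m + 1).factorial *
          ((-1 : ℝ) ^ j * j * (m + 1).choose j * (2 * (m + 1) - j).choose n) := by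
    intro j hj
    have hjk : j ≤ m + 1 := Nat.lt_succ_iff.1 (mem_range.1 hj)
    rw [mul_div_assoc, factorial_div_factorial_mul_factorial_mul_factorial (by omega) hjk]
    ring
  rw [sum_congr rfl hterm, ← mul_sum, sum_range_neg_one_pow_mul_mul_choose_mul_choose_two_mul_sub,
    Nat.add_sub_cancel]
  rcases lt_trichotomy n m with hlt | rfl | _
  · simp [hlt, hlt.not_ge]
  · rw [if_pos le_rfl, Nat.sub_self, Nat.choose_zero_right, if_neg (lt_irrefl n), if_pos rfl,
      Nat.factorial_succ]
    push_cast
    field_simp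
  · obtain rfl : n = m + 1 := by omega
    rw [if_pos (by omega), Nat.add_sub_cancel_left, Nat.choose_one_right, if_neg (by omega),
      if_neg (by omega)]
    push_cast
    field_simp
end

section
/- For integers k ≥ 1 and 0 ≤ n ≤ k, the sum Σ_{j=0}^{k} (-1)^j (n-j) (2k-j)! / ((2k-j-n)! · j! · (k-j)!) equals 0 if n < k-1, equals 1 if n = k-1, and equals k(k+1) if n = k. -/
/-!
Multiplying by `k! / n!` turns the summand into `(-1)^j (n - j) C(k, j) C(2k - j, n)`. Reflecting
`j ↦ k - j` exhibits the sum as the `k`-th forward difference at `k` of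
`f x = (x - n + 2(n - k)) C(x, n) = (n + 1) C(x, n + 1) + 2(n - k) C(x, n)`, and
`Δ^k C(x, m) = C(x, m - k)` for `k ≤ m` and `0` otherwise. So the difference is `k (k + 1)` for
`n = k`, `k` for `n = k - 1` and `0` below, and dividing back by `k! / n!` gives the three values.
-/

open Finset fwdDiff

lemma fwdDiff_iter_choose_eq_ite (k m : ℕ) :
    (Δ_[1])^[k] (fun x ↦ x.choose m : ℕ → ℤ) =
      fun x ↦ if k ≤ m then (x.choose (m - k) : ℤ) else 0 := by
  by_cases hkm : k ≤ m
  · obtain ⟨j, rfl⟩ := Nat.exists_eq_add_of_le hkm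
    simp [fwdDiff_iter_choose]
  · obtain ⟨r, rfl⟩ := Nat.exists_eq_add_of_lt (not_le.mp hkm)
    have hchoose : (Δ_[1])^[m] (fun x ↦ x.choose m : ℕ → ℤ) = fun _ ↦ 1 := by
      simpa using fwdDiff_iter_choose 0 m
    have hconst : Δ_[1] (fun _ ↦ 1 : ℕ → ℤ) = fun _ ↦ 0 := fwdDiff_const 1 1
    have hzero : Δ_[1] (fun _ ↦ 0 : ℕ → ℤ) = fun _ ↦ 0 := fwdDiff_const 1 0
    simp only [hkm, if_false]
    rw [show m + r + 1 = r + 1 + m by ring, Function.iterate_add_apply, hchoose,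
      Function.iterate_succ_apply, hconst, Function.iterate_fixed hzero]

lemma sub_mul_choose_eq_succ_mul_choose_succ (x n : ℕ) :
    ((x : ℤ) - n) * x.choose n = (n + 1) * x.choose (n + 1) := by
  rcases lt_or_ge x n with hxn | hnx
  · simp [Nat.choose_eq_zero_of_lt hxn, Nat.choose_eq_zero_of_lt (hxn.trans (Nat.lt_succ_self n))]
  · have := Nat.choose_succ_right_eq x n
    zify [hnx] at this
    linarith

lemma sum_range_neg_one_pow_mul_choose_eq_fwdDiff_iter (f : ℕ → ℤ) (k y : ℕ) :
    ∑ j ∈ range (k + 1), (-1) ^ j * k.choose j * f (y + k - j) = (Δ_[1])^[k] f y := by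
  rw [fwdDiff_iter_eq_sum_shift, ← sum_range_reflect]
  refine sum_congr rfl fun i hi ↦ ?_
  have hik : i ≤ k := Nat.lt_succ_iff.mp (mem_range.mp hi)
  rw [smul_eq_mul, show k + 1 - 1 - i = k - i by omega, Nat.choose_symm hik,
    show y + k - (k - i) = y + i • 1 by simp; omega]

lemma sum_range_neg_one_pow_mul_sub_mul_choose_mul_choose (k n : ℕ) :
    ∑ j ∈ range (k + 1), (-1) ^ j * ((n : ℤ) - j) * k.choose j * (2 * k - j).choose n =
      (n + 1) * (if k ≤ n + 1 then (k.choose (n + 1 - k) : ℤ) else 0) +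
        2 * ((n : ℤ) - k) * (if k ≤ n then (k.choose (n - k) : ℤ) else 0) := by
  set f : ℕ → ℤ := (n + 1 : ℤ) • (fun x ↦ (x.choose (n + 1) : ℤ)) +
    (2 * ((n : ℤ) - k)) • fun x ↦ (x.choose n : ℤ)
  have hterm : ∀ j ∈ range (k + 1),
      (-1) ^ j * ((n : ℤ) - j) * k.choose j * (2 * k - j).choose n =
        (-1) ^ j * k.choose j * f (k + k - j) := by
    intro j hj
    have hjk : j ≤ 2 * k := by have := mem_range.mp hj; omega
    rw [show k + k - j = 2 * k - j by omega]
    simp only [f, Pi.add_apply, Pi.smul_apply, smul_eq_mul,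
      ← sub_mul_choose_eq_succ_mul_choose_succ, Nat.cast_sub hjk]
    push_cast
    ring
  rw [sum_congr rfl hterm, sum_range_neg_one_pow_mul_choose_eq_fwdDiff_iter, fwdDiff_iter_add, fwdDiff_iter_const_smul, fwdDiff_iter_const_smul,
    fwdDiff_iter_choose_eq_ite, fwdDiff_iter_choose_eq_ite]
  simp only [Pi.add_apply, Pi.smul_apply, smul_eq_mul]

open Nat in
lemma factorial_div_factorial_mul_factorial_mul_factorial_s2 {K : Type*} [Field K] [CharZero K]
    {a b k j : ℕ} (hba : b ≤ a) (hjk : j ≤ k) :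
    (a ! : K) / ((a - b)! * j ! * (k - j)!) = b ! / k ! * (a.choose b * k.choose j) := by
  rw [Nat.cast_choose K hba, Nat.cast_choose K hjk]
  have hb : (b ! : K) ≠ 0 := by exact_mod_cast b.factorial_ne_zero
  have hk : (k ! : K) ≠ 0 := by exact_mod_cast k.factorial_ne_zero
  field_simp

theorem stmt2 (k n : ℕ) (hk : 1 ≤ k) (hnk : n ≤ k) :
    ∑ j ∈ Finset.range (k + 1),
      (-1 : ℝ) ^ j * ((n : ℝ) - (j : ℝ)) * (Nat.factorial (2 * k - j)) /
        ((Nat.factorial (2 * k - j - n)) * (Nat.factorial j) * (Nat.factorial (k - j)))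
      = if n < k - 1 then 0 else if n = k - 1 then 1 else (k : ℝ) * (k + 1) := by
  have hterm : ∀ j ∈ range (k + 1),
      (-1 : ℝ) ^ j * ((n : ℝ) - (j : ℝ)) * (Nat.factorial (2 * k - j)) /
        ((Nat.factorial (2 * k - j - n)) * (Nat.factorial j) * (Nat.factorial (k - j))) =
      n.factorial / k.factorial *
        (((-1) ^ j * ((n : ℤ) - j) * k.choose j * (2 * k - j).choose n : ℤ) : ℝ) := by
    intro j hj
    have hjk : j ≤ k := Nat.lt_succ_iff.mp (mem_range.mp hj)
    rw [mul_div_assoc, factorial_div_factorial_mul_factorial_mul_factorial_s2 (by omega) hjk]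
    push_cast
    ring
  rw [sum_congr rfl hterm, ← mul_sum, ← Int.cast_sum,
    sum_range_neg_one_pow_mul_sub_mul_choose_mul_choose]
  obtain ⟨m, rfl⟩ : ∃ m, k = m + 1 := ⟨k - 1, by omega⟩
  rcases hnk.eq_or_lt with rfl | hlt
  · field_simp
    simp [mul_comm]
  rcases (Nat.lt_succ_iff.mp hlt).eq_or_lt with rfl | hlt'
  · field_simp
    simp [Nat.factorial_succ, mul_comm]
  · simp [hlt', show ¬ m + 1 ≤ n + 1 by omega, show ¬ m + 1 ≤ n by omega]
end

section
/- For all integers k and i with 0 < i < k, the sum Σ_{n=0}^{k} (-1)^n · n/(2k-n) · C(k,n) · C(2k-n, 2i) · (-n-2i)_k equals 0, where (x)_k = x(x+1)···(x+k-1) is the Pochhammer (rising factorial) symbol. -/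
/-!
Write k = K + 1, i = j + 1 and n = m + 1 (the n = 0 term vanishes). The identities
(m + 1) C(K+1, m+1) = (K + 1) C(K, m), 2i C(N, 2i) = N C(N-1, 2i-1) and
(-N)_k = (-1)^k k! C(N, k) turn the sum into a constant multiple of
  Σ_m (-1)^m C(K, m) C(2K-m, a) C(m+a+2, K+1),   a = 2i - 1 odd.
Expanding C(2K-m, a) = Σ_{s+p=a} C(K, s) C(K-m, p) by Vandermonde and summing over m with
the forward-difference identity Σ_m (-1)^m C(N, m) C(b+m, N+c) = (-1)^N C(b, c), this becomes
  Σ_{s+p=a} (-1)^(K+p) C(K, s) C(K, p) C(a+2, p+1),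
whose terms change sign under s ↔ p because a is odd.
-/

open Finset

lemma Nat.choose_mul_choose_sub (N r s : ℕ) :
    N.choose r * (N - r).choose s = N.choose (r + s) * (r + s).choose r := by
  by_cases h : r + s ≤ N
  · simpa using (Nat.choose_mul (n := N) (Nat.le_add_right r s)).symm
  · rw [Nat.choose_eq_zero_of_lt (not_le.mp h), zero_mul]
    rcases le_or_gt r N with hr | hr
    · rw [Nat.choose_eq_zero_of_lt (by omega : N - r < s), mul_zero]
    · rw [Nat.choose_eq_zero_of_lt hr, zero_mul]

lemma Nat.choose_mul_choose_sub_comm (N r s : ℕ) :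
    N.choose r * (N - r).choose s = N.choose s * (N - s).choose r := by
  rw [Nat.choose_mul_choose_sub, Nat.choose_mul_choose_sub, add_comm, Nat.choose_symm_add]

lemma alternating_sum_range_choose_mul_add_choose (N b c : ℕ) :
    ∑ m ∈ range (N + 1), (-1 : ℤ) ^ m * N.choose m * (b + m).choose (N + c)
      = (-1) ^ N * b.choose c := by
  have h := congr_fun (fwdDiff_iter_choose c N) b
  rw [fwdDiff_iter_eq_sum_shift] at h
  simp only [smul_eq_mul, mul_one] at h
  rw [← h, mul_sum]
  refine sum_congr rfl fun m hm => ?_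
  have hm : m ≤ N := Nat.lt_succ_iff.mp (mem_range.mp hm)
  rw [← mul_assoc, ← mul_assoc, ← pow_add, show N + (N - m) = m + 2 * (N - m) by omega,
    pow_add, pow_mul, neg_one_sq, one_pow, mul_one]

lemma alternating_sum_range_choose_mul_choose_sub_mul_add_choose (K p b : ℕ) :
    ∑ m ∈ range (K + 1), (-1 : ℤ) ^ m * K.choose m * (K - m).choose p * (b + m).choose (K + 1)
      = (-1) ^ (K + p) * K.choose p * b.choose (p + 1) := by
  rcases lt_or_ge K p with hK | hp
  · rw [Nat.choose_eq_zero_of_lt hK, Nat.cast_zero, mul_zero, zero_mul]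
    refine sum_eq_zero fun m _ => ?_
    rw [Nat.choose_eq_zero_of_lt (by omega : K - m < p), Nat.cast_zero, mul_zero, zero_mul]
  obtain ⟨N, rfl⟩ := Nat.exists_eq_add_of_le' hp
  have hterm : ∀ m,
      (-1 : ℤ) ^ m * (N + p).choose m * (N + p - m).choose p * (b + m).choose (N + p + 1)
        = (N + p).choose p * ((-1) ^ m * N.choose m * (b + m).choose (N + (p + 1))) := by
    intro m
    rw [← add_assoc, mul_assoc ((-1 : ℤ) ^ m), ← Nat.cast_mul, Nat.choose_mul_choose_sub_comm,
      Nat.add_sub_cancel]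
    push_cast
    ring
  rw [sum_congr rfl fun m _ => hterm m, ← mul_sum, add_right_comm, sum_range_add,
    alternating_sum_range_choose_mul_add_choose]
  have htail : ∑ x ∈ range p, (-1 : ℤ) ^ (N + 1 + x) * N.choose (N + 1 + x)
      * (b + (N + 1 + x)).choose (N + (p + 1)) = 0 :=
    sum_eq_zero fun x _ => by rw [Nat.choose_eq_zero_of_lt (by omega), Nat.cast_zero, mul_zero,
      zero_mul]
  rw [htail, add_zero, add_assoc, ← two_mul, pow_add, pow_mul, neg_one_sq, one_pow]
  ring

theorem alternating_sum_choose_mul_choose_mul_choose_eq_zero_of_odd (K a : ℕ)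
    (ha : Odd a) :
    ∑ m ∈ range (K + 1),
      (-1 : ℤ) ^ m * K.choose m * (2 * K - m).choose a * (a + 2 + m).choose (K + 1) = 0 := by
  have hexpand : ∀ m ∈ range (K + 1),
      (-1 : ℤ) ^ m * K.choose m * (2 * K - m).choose a * (a + 2 + m).choose (K + 1)
        = ∑ x ∈ antidiagonal a, (K.choose x.1 : ℤ)
            * ((-1) ^ m * K.choose m * (K - m).choose x.2 * (a + 2 + m).choose (K + 1)) := by
    intro m hm
    rw [show 2 * K - m = K + (K - m) by simp at hm; omega, Nat.add_choose_eq]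
    push_cast
    rw [mul_sum, sum_mul]
    exact sum_congr rfl fun x _ => by ring
  rw [sum_congr rfl hexpand, sum_comm]
  simp only [← mul_sum, alternating_sum_range_choose_mul_choose_sub_mul_add_choose]
  have hswap : ∀ x ∈ antidiagonal a,
      (K.choose x.2 : ℤ) * ((-1) ^ (K + x.1) * K.choose x.1 * (a + 2).choose (x.1 + 1))
        = -((K.choose x.1 : ℤ)
            * ((-1) ^ (K + x.2) * K.choose x.2 * (a + 2).choose (x.2 + 1))) := by
    rintro ⟨s, p⟩ hsp
    rw [HasAntidiagonal.mem_antidiagonal] at hsp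
    subst hsp
    have hsign : (-1 : ℤ) ^ (K + s) = -(-1) ^ (K + p) := by
      rcases Nat.even_or_odd p with hp | hp
      · simp [pow_add, hp.neg_one_pow, ((Nat.odd_add.mp ha).mpr hp).neg_one_pow]
      · simp [pow_add, hp.neg_one_pow, ((Nat.odd_add'.mp ha).mp hp).neg_one_pow]
    rw [hsign, show s + p + 2 = (s + 1) + (p + 1) by ring, Nat.choose_symm_add]
    ring
  have h := Nat.sum_antidiagonal_swap (n := a) (f := fun x =>
    (K.choose x.1 : ℤ) * ((-1) ^ (K + x.2) * K.choose x.2 * (a + 2).choose (x.2 + 1)))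
  simp only [Prod.fst_swap, Prod.snd_swap] at h
  rw [sum_congr rfl hswap, sum_neg_distrib] at h
  linarith

lemma ascPochhammer_eval_neg_natCast (R : Type*) [CommRing R] (N k : ℕ) :
    (ascPochhammer R k).eval (-(N : R)) = (-1) ^ k * k.factorial * N.choose k := by
  rw [ascPochhammer_eval_neg_eq_descPochhammer, descPochhammer_eval_eq_descFactorial,
    Nat.descFactorial_eq_factorial_mul_choose, Nat.cast_mul, mul_assoc]

lemma summand_succ_eq_const_mul (K j m : ℕ) (hm : m ≤ K) :
    (-1 : ℝ) ^ (m + 1) * ((m + 1 : ℕ) : ℝ)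
          / (2 * ((K + 1 : ℕ) : ℝ) - ((m + 1 : ℕ) : ℝ))
        * ((K + 1).choose (m + 1) : ℝ) * ((2 * (K + 1) - (m + 1)).choose (2 * (j + 1)) : ℝ)
        * (ascPochhammer ℝ (K + 1)).eval (-((m + 1 : ℕ) : ℝ) - 2 * ((j + 1 : ℕ) : ℝ))
      = (-1) ^ K * (K + 1).factorial * (K + 1) / (2 * (j + 1)) *
        (((-1) ^ m * K.choose m * (2 * K - m).choose (2 * j + 1)
          * (2 * j + 1 + 2 + m).choose (K + 1) : ℤ) : ℝ) := by
  have hpoch :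
      -((m + 1 : ℕ) : ℝ) - 2 * ((j + 1 : ℕ) : ℝ) = -((2 * j + 1 + 2 + m : ℕ) : ℝ) := by
    push_cast; ring
  have hden :
      2 * ((K + 1 : ℕ) : ℝ) - ((m + 1 : ℕ) : ℝ) = ((2 * K - m + 1 : ℕ) : ℝ) := by
    push_cast [Nat.cast_sub (show m ≤ 2 * K by omega)]; ring
  have habsorb₁ :
      ((K + 1 : ℕ) : ℝ) * K.choose m = (K + 1).choose (m + 1) * ((m + 1 : ℕ) : ℝ) := by
    exact_mod_cast Nat.add_one_mul_choose_eq K m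
  have habsorb₂ : ((2 * K - m + 1 : ℕ) : ℝ) * (2 * K - m).choose (2 * j + 1)
      = (2 * K - m + 1).choose (2 * j + 1 + 1) * ((2 * j + 1 + 1 : ℕ) : ℝ) := by
    exact_mod_cast Nat.add_one_mul_choose_eq (2 * K - m) (2 * j + 1)
  rw [hpoch, ascPochhammer_eval_neg_natCast, hden,
    show 2 * (K + 1) - (m + 1) = 2 * K - m + 1 by omega, show 2 * (j + 1) = 2 * j + 1 + 1 by ring]
  push_cast at habsorb₁ habsorb₂ ⊢
  field_simp
  linear_combination
    (-(-1) ^ m * (-1) ^ K * ((2 * j + 1 + 2 + m).choose (K + 1) : ℝ)) *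
      ((((2 * K - m : ℕ) : ℝ) + 1) * (2 * K - m).choose (2 * j + 1) * habsorb₁
        + (K + 1).choose (m + 1) * ((m : ℝ) + 1) * habsorb₂)

theorem stmt4_general (k i : ℕ) (hi : 0 < i) :
    ∑ n ∈ Finset.range (k + 1),
      (-1 : ℝ) ^ n * (n : ℝ) / ((2 * k : ℝ) - n) * (Nat.choose k n)
        * (Nat.choose (2 * k - n) (2 * i))
        * (Polynomial.eval (-(n : ℝ) - 2 * i) (ascPochhammer ℝ k))
      = 0 := by
  rcases k with _ | K
  · simp
  obtain ⟨j, rfl⟩ : ∃ j, i = j + 1 := ⟨i - 1, by omega⟩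
  rw [sum_range_succ', Nat.cast_zero, mul_zero, zero_div, zero_mul, zero_mul, zero_mul, add_zero,
    sum_congr rfl fun m hm =>
      summand_succ_eq_const_mul K j m (Nat.lt_succ_iff.mp (mem_range.mp hm)),
    ← mul_sum, ← Int.cast_sum, alternating_sum_choose_mul_choose_mul_choose_eq_zero_of_odd K
      (2 * j + 1) (odd_two_mul_add_one j), Int.cast_zero, mul_zero]

theorem stmt4 (k i : ℕ) (hi : 0 < i) (hik : i < k) :
    ∑ n ∈ Finset.range (k + 1),
      (-1 : ℝ) ^ n * (n : ℝ) / ((2 * k : ℝ) - n) * (Nat.choose k n)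
        * (Nat.choose (2 * k - n) (2 * i))
        * (Polynomial.eval (-(n : ℝ) - 2 * i) (ascPochhammer ℝ k))
      = 0 :=
  stmt4_general k i hi
end

section
/- For all integers k and i with 0 < i < k, the sum Σ_{n=0}^{k} (-1)^n · (2k-n-2i)/(2k-n) · C(k,n) · C(2k-n, 2i) · (-n-2i)_{k-1} equals 0, where (x)_{k-1} is the rising factorial with k-1 factors. -/
/-!
Absorbing `(2k-n-2i)/(2k-n)` into `C(2k-n, 2i)` and evaluating the Pochhammer symbol at the
negative integer `-(n+2i)` turns the `n`-th term into `(-1)^(k-1) (k-1)!` times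
`(-1)^n C(k,n) C(2k-1-n, 2i) C(n+2i, k-1)`. These terms vanish for `n > 2k-1-2i`, and the
reflection `n ↦ 2k-1-2i-n` (across an odd total) preserves the product of binomials while
flipping the sign, so the terms cancel in pairs.
-/

open Finset Nat

theorem ascPochhammer_eval_neg_natCast_s5 (R : Type*) [Ring R] (m j : ℕ) :
    (ascPochhammer R j).eval (-(m : R)) = (-1) ^ j * j ! * m.choose j := by
  rw [ascPochhammer_eval_neg_eq_descPochhammer, descPochhammer_eval_eq_descFactorial,
    Nat.descFactorial_eq_factorial_mul_choose, Nat.cast_mul, mul_assoc]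

theorem sub_div_mul_choose_eq_choose_pred {K : Type*} [Field K] [CharZero K] {m : ℕ}
    (hm : 0 < m) (r : ℕ) : ((m : K) - r) / m * m.choose r = (m - 1).choose r := by
  obtain ⟨m, rfl⟩ := Nat.exists_eq_add_of_lt hm
  simp only [zero_add, Nat.add_sub_cancel]
  rcases le_or_gt r (m + 1) with hr | hr
  · have key := congrArg (Nat.cast : ℕ → K) (Nat.choose_mul_succ_eq m r)
    push_cast [Nat.cast_sub hr] at key ⊢
    field_simp
    linear_combination -key
  · simp [Nat.choose_eq_zero_of_lt hr, Nat.choose_eq_zero_of_lt (Nat.lt_of_succ_lt hr)]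

theorem Finset.sum_range_succ_eq_zero_of_reflect {M : Type*} [AddCommGroup M]
    [IsAddTorsionFree M] (f : ℕ → M) (N : ℕ) (h : ∀ n ≤ N, f (N - n) = -f n) :
    ∑ n ∈ range (N + 1), f n = 0 := by
  have hrefl := sum_range_reflect f (N + 1)
  rw [Nat.add_sub_cancel, sum_congr rfl fun n hn => h n (Nat.lt_succ_iff.mp (mem_range.mp hn)),
    sum_neg_distrib] at hrefl
  exact self_eq_neg.mp hrefl.symm

/-- Both sides equal `k! (a+j)! (b+j)! / (a! b! (k-a)! (k-b)! j! (k-1)!)` when `a, b ≤ k`,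
and both vanish otherwise. -/
theorem choose_mul_choose_mul_choose_comm {k j a b : ℕ} (hab : a + b + j + 1 = 2 * k) :
    k.choose a * (b + j).choose j * (a + j).choose (k - 1)
      = k.choose b * (a + j).choose j * (b + j).choose (k - 1) := by
  rcases le_or_gt a k with ha | ha
  · rcases le_or_gt b k with hb | hb
    · suffices (k.choose a * (b + j).choose j * (a + j).choose (k - 1) : ℚ)
          = k.choose b * (a + j).choose j * (b + j).choose (k - 1) by exact_mod_cast this
      rw [Nat.cast_choose ℚ ha, Nat.cast_choose ℚ hb, Nat.cast_choose ℚ (Nat.le_add_left j b),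
        Nat.cast_choose ℚ (Nat.le_add_left j a),
        Nat.cast_choose ℚ (show k - 1 ≤ a + j by omega),
        Nat.cast_choose ℚ (show k - 1 ≤ b + j by omega), Nat.add_sub_cancel, Nat.add_sub_cancel,
        show a + j - (k - 1) = k - b by omega, show b + j - (k - 1) = k - a by omega]
      ring
    · rw [Nat.choose_eq_zero_of_lt hb, Nat.choose_eq_zero_of_lt (show a + j < k - 1 by omega)]
      simp
  · rw [Nat.choose_eq_zero_of_lt ha, Nat.choose_eq_zero_of_lt (show b + j < k - 1 by omega)]
    simp

def alternatingChooseTerm (k i n : ℕ) : ℤ :=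
  (-1) ^ n * k.choose n * (2 * k - 1 - n).choose (2 * i) * (n + 2 * i).choose (k - 1)

theorem alternatingChooseTerm_reflect {k i n : ℕ} (hik : i < k) (hn : n ≤ 2 * k - 1 - 2 * i) :
    alternatingChooseTerm k i (2 * k - 1 - 2 * i - n) = -alternatingChooseTerm k i n := by
  have hsign : (-1 : ℤ) ^ (2 * k - 1 - 2 * i - n) = -(-1) ^ n := by
    have hodd : (-1 : ℤ) ^ (2 * k - 1 - 2 * i - n + n) = -1 :=
      Odd.neg_one_pow ⟨k - i - 1, by omega⟩
    rw [pow_add] at hodd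
    rcases neg_one_pow_eq_or ℤ n with h | h <;> rw [h] at hodd ⊢ <;> linarith
  have hsymm := choose_mul_choose_mul_choose_comm (k := k) (j := 2 * i) (a := n)
    (b := 2 * k - 1 - 2 * i - n) (by omega)
  unfold alternatingChooseTerm
  rw [show 2 * k - 1 - 2 * i - n + 2 * i = 2 * k - 1 - n by omega] at hsymm
  rw [hsign, show 2 * k - 1 - (2 * k - 1 - 2 * i - n) = n + 2 * i by omega,
    show 2 * k - 1 - 2 * i - n + 2 * i = 2 * k - 1 - n by omega]
  have hsymmZ := congrArg (Nat.cast : ℕ → ℤ) hsymm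
  push_cast at hsymmZ
  linear_combination (-1 : ℤ) ^ n * hsymmZ

theorem alternatingChooseTerm_eq_zero_of_lt {k i n : ℕ} (hi : 0 < i)
    (hn : min k (2 * k - 1 - 2 * i) < n) : alternatingChooseTerm k i n = 0 := by
  unfold alternatingChooseTerm
  rcases min_lt_iff.mp hn with hk | hN
  · simp [Nat.choose_eq_zero_of_lt hk]
  · simp [Nat.choose_eq_zero_of_lt (show 2 * k - 1 - n < 2 * i by omega)]

theorem sum_alternatingChooseTerm_eq_zero {k i : ℕ} (hi : 0 < i) (hik : i < k) :
    ∑ n ∈ range (k + 1), alternatingChooseTerm k i n = 0 := by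
  have hvanish : ∀ n, min k (2 * k - 1 - 2 * i) < n → alternatingChooseTerm k i n = 0 :=
    fun n => alternatingChooseTerm_eq_zero_of_lt hi
  calc ∑ n ∈ range (k + 1), alternatingChooseTerm k i n
      = ∑ n ∈ range (2 * k), alternatingChooseTerm k i n :=
        sum_subset (range_subset_range.mpr (by omega))
          fun n _ hn => hvanish n (by rw [mem_range] at hn; omega)
    _ = ∑ n ∈ range (2 * k - 1 - 2 * i + 1), alternatingChooseTerm k i n :=
        (sum_subset (range_subset_range.mpr (by omega))
          fun n _ hn => hvanish n (by rw [mem_range] at hn; omega)).symm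
    _ = 0 := sum_range_succ_eq_zero_of_reflect _ _ fun n hn => alternatingChooseTerm_reflect hik hn

theorem stmt5 (k i : ℕ) (hi : 0 < i) (hik : i < k) :
    ∑ n ∈ Finset.range (k + 1),
      (-1 : ℝ) ^ n * ((2 * k : ℝ) - n - 2 * i) / ((2 * k : ℝ) - n) * (Nat.choose k n)
        * (Nat.choose (2 * k - n) (2 * i))
        * (Polynomial.eval (-(n : ℝ) - 2 * i) (ascPochhammer ℝ (k - 1)))
      = 0 := by
  have hterm : ∀ n ∈ range (k + 1),
      (-1 : ℝ) ^ n * ((2 * k : ℝ) - n - 2 * i) / ((2 * k : ℝ) - n) * (Nat.choose k n)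
        * (Nat.choose (2 * k - n) (2 * i))
        * (Polynomial.eval (-(n : ℝ) - 2 * i) (ascPochhammer ℝ (k - 1)))
      = (-1) ^ (k - 1) * (k - 1)! * (alternatingChooseTerm k i n : ℝ) := by
    intro n hn
    have hnk : n < 2 * k := by rw [mem_range] at hn; omega
    have habsorb := sub_div_mul_choose_eq_choose_pred (K := ℝ) (m := 2 * k - n) (by omega) (2 * i)
    rw [Nat.cast_sub hnk.le, show 2 * k - n - 1 = 2 * k - 1 - n by omega] at habsorb
    rw [show -(n : ℝ) - 2 * i = -((n + 2 * i : ℕ) : ℝ) by push_cast; ring,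
      ascPochhammer_eval_neg_natCast_s5]
    unfold alternatingChooseTerm
    push_cast at habsorb ⊢
    linear_combination ((-1) ^ n * (-1) ^ (k - 1) * (k - 1)! * k.choose n
      * (n + 2 * i).choose (k - 1) : ℝ) * habsorb
  rw [sum_congr rfl hterm, ← mul_sum]
  exact_mod_cast mul_eq_zero_of_right _ (sum_alternatingChooseTerm_eq_zero hi hik)
end

section
/- Let f : ℝ → ℝ be even, continuous, and integrable with Fourier transform \hat{f} supported in (-1/2, 1/2). Then for |y| < 1/2 the Fourier transform of W_U² - 1 evaluated at y equals -2|y|³ + 4|y| - 2; that is, ∫_ℝ f(x)(W_U²(x) - 1) dx = ∫_{-1/2}^{1/2} \hat{f}(y)(-2|y|³ + 4|y| - 2) dy. -/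
open MeasureTheory Real Complex FourierTransform

theorem aux_deriv (c : ℂ) (a0 a1 a2 a3 : ℂ) (x : ℝ) :
    HasDerivAt (fun v : ℝ => Complex.exp (c * v) *
      (c^3*(a3*(v:ℂ)^3+a2*v^2+a1*v+a0) - c^2*(3*a3*(v:ℂ)^2+2*a2*v+a1)
        + c*(6*a3*(v:ℂ)+2*a2) - 6*a3) / c^4)
      (Complex.exp (c * x) * (a3*(x:ℂ)^3+a2*x^2+a1*x+a0) * c^4 / c^4) x := by
  have h : HasDerivAt (fun z : ℂ => Complex.exp (c * z) *
      (c^3*(a3*z^3+a2*z^2+a1*z+a0) - c^2*(3*a3*z^2+2*a2*z+a1)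
        + c*(6*a3*z+2*a2) - 6*a3) / c^4)
      (Complex.exp (c * x) * (a3*(x:ℂ)^3+a2*x^2+a1*x+a0) * c^4 / c^4) (x:ℂ) := by
    have h1 : HasDerivAt (fun z : ℂ => Complex.exp (c * z)) (c * Complex.exp (c * x)) (x:ℂ) := by
      simpa [mul_comm] using ((hasDerivAt_id (x:ℂ)).const_mul c).cexp
    have h2 : HasDerivAt (fun z : ℂ =>
        c^3*(a3*z^3+a2*z^2+a1*z+a0) - c^2*(3*a3*z^2+2*a2*z+a1) + c*(6*a3*z+2*a2) - 6*a3)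
        (c^3*(3*a3*(x:ℂ)^2+2*a2*x+a1) - c^2*(6*a3*(x:ℂ)+2*a2) + c*(6*a3)) (x:ℂ) := by
      have p3 := hasDerivAt_pow 3 (x:ℂ)
      have p2 := hasDerivAt_pow 2 (x:ℂ)
      have p1 := hasDerivAt_id (x:ℂ)
      have : HasDerivAt (fun z : ℂ =>
          c^3*(a3*z^3+a2*z^2+a1*z+a0) - c^2*(3*a3*z^2+2*a2*z+a1) + c*(6*a3*z+2*a2) - 6*a3)
          (c^3*(a3*(3*(x:ℂ)^2)+a2*(2*(x:ℂ)^1)+a1*1+0) - c^2*(3*a3*(2*(x:ℂ)^1)+2*a2*1+0)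
            + c*(6*a3*1+0) - 0) (x:ℂ) := by
        apply HasDerivAt.sub _ (hasDerivAt_const _ _)
        apply HasDerivAt.add
        apply HasDerivAt.sub
        · exact (((((p3.const_mul a3).add ((p2.const_mul a2))).add
            ((p1.const_mul a1))).add (hasDerivAt_const _ a0)).const_mul _)
        · exact ((((p2.const_mul (3*a3)).add ((p1.const_mul (2*a2)))).add
            (hasDerivAt_const _ a1)).const_mul _)
        · exact (((p1.const_mul (6*a3)).add (hasDerivAt_const _ (2*a2))).const_mul _)
      convert this using 1
      ring
    have := (h1.mul h2).div_const (c^4)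
    refine this.congr_deriv ?_
    ring
  exact h.comp_ofReal

noncomputable def hfun : ℝ → ℝ := fun y => if |y| ≤ 1 then -2*|y|^3+4*|y|-2 else 0

theorem hfun_cont : Continuous hfun := by
  have : Continuous fun t : ℝ => if t ≤ 1 then -2*t^3+4*t-2 else 0 := by
    apply Continuous.if_le (by fun_prop) continuous_const continuous_id continuous_const
    intro x hx; simp only [id] at hx; rw [hx]; norm_num
  exact this.comp continuous_abs

theorem hfun_supp : Function.support hfun ⊆ Set.Icc (-1) 1 := by
  intro y hy
  simp only [Function.mem_support, hfun] at hy
  by_contra hc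
  rw [Set.mem_Icc, not_and_or, not_le, not_le] at hc
  have : ¬ |y| ≤ 1 := by cases hc with
    | inl h => rw [abs_le]; push_neg; intro h'; linarith
    | inr h => rw [abs_le]; push_neg; intro h'; linarith
  simp [this] at hy

theorem key (x : ℝ) (hx : x ≠ 0) :
    𝓕 (fun y : ℝ => (hfun y : ℂ)) x
      = ((-((2 + Real.cos (2 * π * x)) / (π * x) ^ 2) + 3 * Real.sin (2 * π * x) / (π * x) ^ 3
        + 3 * (Real.cos (2 * π * x) - 1) / (2 * (π * x) ^ 4) : ℝ) : ℂ) := by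
  have hπ : (π:ℂ) ≠ 0 := Complex.ofReal_ne_zero.2 Real.pi_ne_zero
  have hxz : (x:ℂ) ≠ 0 := Complex.ofReal_ne_zero.2 hx
  set c : ℂ := ((-2*π*x : ℝ)) * Complex.I with hcdef
  have hc : c ≠ 0 := by
    rw [hcdef]
    apply mul_ne_zero _ Complex.I_ne_zero
    rw [Complex.ofReal_ne_zero]
    intro h
    apply hx
    have h2 : (2:ℝ) * π ≠ 0 := mul_ne_zero two_ne_zero Real.pi_ne_zero
    have : -2*π*x = -(2*π)*x := by ring
    rw [this, neg_mul, neg_eq_zero] at h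
    exact (mul_eq_zero.1 h).resolve_left (by exact h2)
  rw [Real.fourier_real_eq_integral_exp_smul]
  simp only [smul_eq_mul]
  have hFc : Continuous fun v : ℝ => Complex.exp (↑(-2*π*v*x) * Complex.I) * (hfun v:ℂ) := by
    apply Continuous.mul
    · exact Complex.continuous_exp.comp (by fun_prop)
    · exact Complex.continuous_ofReal.comp hfun_cont
  have step1 : (∫ v : ℝ, Complex.exp (↑(-2*π*v*x) * Complex.I) * (hfun v:ℂ))
      = ∫ v in Set.Icc (-1:ℝ) 1, Complex.exp (↑(-2*π*v*x) * Complex.I) * (hfun v:ℂ) := by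
    rw [setIntegral_eq_integral_of_forall_compl_eq_zero]
    intro v hv
    have : hfun v = 0 := Function.notMem_support.1 (fun hs => hv (hfun_supp hs))
    simp [this]
  rw [step1, MeasureTheory.integral_Icc_eq_integral_Ioc,
    ← intervalIntegral.integral_of_le (by norm_num : (-1:ℝ) ≤ 1),
    ← intervalIntegral.integral_add_adjacent_intervals
      (hFc.intervalIntegrable (-1) 0) (hFc.intervalIntegrable 0 1)]
  have congrL : ∀ v ∈ Set.uIcc (-1:ℝ) 0,
      Complex.exp (↑(-2*π*v*x) * Complex.I) * (hfun v:ℂ)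
        = Complex.exp (c * v) * ((2:ℂ)*(v:ℂ)^3+(0:ℂ)*(v:ℂ)^2+(-4)*v+(-2)) * c^4 / c^4 := by
    intro v hv
    rw [Set.uIcc_of_le (by norm_num : (-1:ℝ) ≤ 0), Set.mem_Icc] at hv
    have habs : |v| = -v := abs_of_nonpos hv.2
    have h1 : |v| ≤ 1 := by rw [habs]; linarith [hv.1]
    have hh : hfun v = 2*v^3-4*v-2 := by
      simp only [hfun]; rw [if_pos h1, habs]; ring
    have he : (↑(-2*π*v*x) * Complex.I : ℂ) = c * v := by
      rw [hcdef]; push_cast; ring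
    rw [hh, he, mul_div_assoc, div_self (pow_ne_zero _ hc), mul_one]
    push_cast; ring
  have congrR : ∀ v ∈ Set.uIcc (0:ℝ) 1,
      Complex.exp (↑(-2*π*v*x) * Complex.I) * (hfun v:ℂ)
        = Complex.exp (c * v) * ((-2:ℂ)*(v:ℂ)^3+(0:ℂ)*(v:ℂ)^2+4*v+(-2)) * c^4 / c^4 := by
    intro v hv
    rw [Set.uIcc_of_le (by norm_num : (0:ℝ) ≤ 1), Set.mem_Icc] at hv
    have habs : |v| = v := abs_of_nonneg hv.1
    have h1 : |v| ≤ 1 := by rw [habs]; exact hv.2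
    have hh : hfun v = -2*v^3+4*v-2 := by
      simp only [hfun]; rw [if_pos h1, habs]
    have he : (↑(-2*π*v*x) * Complex.I : ℂ) = c * v := by
      rw [hcdef]; push_cast; ring
    rw [hh, he, mul_div_assoc, div_self (pow_ne_zero _ hc), mul_one]
    push_cast; ring
  rw [intervalIntegral.integral_congr congrL, intervalIntegral.integral_congr congrR]
  rw [intervalIntegral.integral_eq_sub_of_hasDerivAt
      (fun v _ => aux_deriv c (-2) (-4) 0 2 v) (Continuous.intervalIntegrable (by fun_prop) _ _),
    intervalIntegral.integral_eq_sub_of_hasDerivAt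
      (fun v _ => aux_deriv c (-2) 4 0 (-2) v) (Continuous.intervalIntegrable (by fun_prop) _ _)]
  -- now algebra
  have e0 : Complex.exp (c*(0:ℝ)) = 1 := by norm_num
  have e1 : Complex.exp (c*(1:ℝ)) = (Real.cos (2*π*x) : ℂ) - (Real.sin (2*π*x) : ℂ) * Complex.I := by
    have : c*((1:ℝ):ℂ) = (-(2*π*x:ℝ) : ℂ) * Complex.I := by
      rw [hcdef]; push_cast; ring
    rw [this, Complex.exp_mul_I, Complex.cos_neg, Complex.sin_neg,
      ← Complex.ofReal_cos, ← Complex.ofReal_sin]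
    ring
  have em1 : Complex.exp (c*((-1:ℝ):ℂ)) = (Real.cos (2*π*x) : ℂ) + (Real.sin (2*π*x) : ℂ) * Complex.I := by
    have : c*((-1:ℝ):ℂ) = ((2*π*x:ℝ) : ℂ) * Complex.I := by
      rw [hcdef]; push_cast; ring
    rw [this, Complex.exp_mul_I, ← Complex.ofReal_cos, ← Complex.ofReal_sin]
  rw [e0, e1, em1, hcdef]
  push_cast
  field_simp
  ring_nf
  simp only [Complex.I_sq, Complex.I_pow_four]
  ring_nf

theorem mult_formula (f g : ℝ → ℂ) (hf : Integrable f) (hg : Integrable g) :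
    ∫ ξ, (𝓕 f ξ) * g ξ = ∫ x, f x * (𝓕 g x) := by
  have hflip : (innerₗ ℝ).flip = innerₗ ℝ := by
    apply LinearMap.ext; intro x; apply LinearMap.ext; intro y
    simp [real_inner_comm]
  have := VectorFourier.integral_fourierIntegral_smul_eq_flip (L := innerₗ ℝ)
    Real.continuous_fourierChar continuous_inner hf hg
  rw [hflip] at this
  simp only [smul_eq_mul] at this
  exact this

theorem stmt10 (f : ℝ → ℝ)
    (heven : ∀ x, f (-x) = f x)
    (hcont : Continuous f)
    (hint : Integrable f)
    (fhat : ℝ → ℂ)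
    (hfhat : ∀ y : ℝ, fhat y = ∫ x : ℝ, (f x : ℂ) * Complex.exp (-(2 * π * Complex.I * x * y)))
    (hsupp : Function.support fhat ⊆ Set.Ioo (-(1/2) : ℝ) (1/2))
    (W : ℝ → ℝ)
    (hW : ∀ x : ℝ, x ≠ 0 → W x =
      -((2 + Real.cos (2 * π * x)) / (π * x) ^ 2) + 3 * Real.sin (2 * π * x) / (π * x) ^ 3
        + 3 * (Real.cos (2 * π * x) - 1) / (2 * (π * x) ^ 4)) :
    ∫ x : ℝ, (f x : ℂ) * (W x : ℂ)
      = ∫ y in Set.Icc (-(1/2) : ℝ) (1/2),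
          fhat y * ((-2 * |y| ^ 3 + 4 * |y| - 2 : ℝ) : ℂ) := by
  have hH : Integrable (fun y : ℝ => (hfun y : ℂ)) := by
    have hcs : HasCompactSupport hfun :=
      HasCompactSupport.of_support_subset_isCompact isCompact_Icc hfun_supp
    exact (hfun_cont.integrable_of_hasCompactSupport hcs).ofReal
  have hf' : Integrable (fun x : ℝ => (f x : ℂ)) := hint.ofReal
  -- step 1 : replace W by the Fourier transform of hfun, a.e.
  have step1 : ∫ x : ℝ, (f x : ℂ) * (W x : ℂ)
      = ∫ x : ℝ, (f x : ℂ) * 𝓕 (fun y : ℝ => (hfun y : ℂ)) x := by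
    apply integral_congr_ae
    filter_upwards [compl_mem_ae_iff.mpr (measure_singleton (0:ℝ))] with x hx
    have hx0 : x ≠ 0 := hx
    rw [hW x hx0, key x hx0]
  -- step 2 : multiplication formula
  have step2 : ∫ x : ℝ, (f x : ℂ) * 𝓕 (fun y : ℝ => (hfun y : ℂ)) x
      = ∫ ξ : ℝ, 𝓕 (fun x : ℝ => (f x : ℂ)) ξ * (hfun ξ : ℂ) :=
    (mult_formula _ _ hf' hH).symm
  -- step 3 : identify 𝓕 f with fhat
  have step3 : ∀ ξ : ℝ, 𝓕 (fun x : ℝ => (f x : ℂ)) ξ = fhat ξ := by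
    intro ξ
    rw [hfhat, Real.fourier_real_eq_integral_exp_smul]
    congr 1
    funext v
    rw [smul_eq_mul, mul_comm]
    congr 1
    push_cast
    ring
  rw [step1, step2]
  simp only [step3]
  -- step 4 : restrict to Icc and identify hfun
  rw [← setIntegral_eq_integral_of_forall_compl_eq_zero
    (s := Set.Icc (-(1/2) : ℝ) (1/2)) (f := fun ξ => fhat ξ * (hfun ξ : ℂ))]
  · apply setIntegral_congr_fun measurableSet_Icc
    intro ξ hξ
    rw [Set.mem_Icc] at hξ
    have h1 : |ξ| ≤ 1 := by
      rw [abs_le]; constructor <;> [linarith [hξ.1]; linarith [hξ.2]]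
    have h2 : hfun ξ = -2 * |ξ| ^ 3 + 4 * |ξ| - 2 := by simp only [hfun, if_pos h1]
    simp only [h2]
  · intro ξ hξ
    have : fhat ξ = 0 := by
      by_contra hne
      exact hξ (Set.Ioo_subset_Icc_self (hsupp (Function.mem_support.2 hne)))
    simp [this]
end

section
/- Let L > 1 be real and f̂ a fixed smooth function. For any complex z with |z| ≤ 1/log T (T ≥ 3) and with \hat f smooth, compactly supported in [0, ∞): Σ_p (log p / p) \hat f(log p / log T) p^{-z} = log T · ∫_0^∞ \hat f(y) T^{-yz} dy + O(1), where the sum is over primes p and the implied constant depends only on \hat f. -/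
open ArithmeticFunction Finset

lemma sum_log_eq (n : ℕ) :
    ∑ m ∈ Finset.Ioc 0 n, Real.log m = ∑ d ∈ Finset.Ioc 0 n, Λ d * ((n / d : ℕ) : ℝ) := by
  have key : ∀ m ∈ Finset.Ioc 0 n,
      Real.log m = ∑ d ∈ Finset.Ioc 0 n, if d ∣ m then Λ d else 0 := by
    intro m hm
    simp only [Finset.mem_Ioc] at hm
    rw [← vonMangoldt_sum, Finset.sum_ite, Finset.sum_const_zero, add_zero]
    congr 1
    ext d
    simp only [Nat.mem_divisors, Finset.mem_filter, Finset.mem_Ioc]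
    constructor
    · rintro ⟨hd, hne⟩
      exact ⟨⟨Nat.pos_of_dvd_of_pos hd hm.1, (Nat.le_of_dvd hm.1 hd).trans hm.2⟩, hd⟩
    · rintro ⟨⟨h1, h2⟩, hd⟩
      exact ⟨hd, by omega⟩
  rw [Finset.sum_congr rfl key, Finset.sum_comm]
  refine Finset.sum_congr rfl fun d hd => ?_
  rw [Finset.sum_ite, Finset.sum_const_zero, add_zero, Finset.sum_const, nsmul_eq_mul, mul_comm]
  congr 2
  simpa using Nat.Ioc_filter_dvd_card_eq_div n d

lemma theta_le (n : ℕ) :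
    ∑ p ∈ (Finset.Ioc 0 n).filter Nat.Prime, Real.log p ≤ n * Real.log 4 := by
  have hset : (Finset.Ioc 0 n).filter Nat.Prime = (Finset.range (n+1)).filter Nat.Prime := by
    ext p
    simp only [Finset.mem_filter, Finset.mem_Ioc, Finset.mem_range]
    exact ⟨fun ⟨⟨_, h2⟩, hp⟩ => ⟨by omega, hp⟩, fun ⟨h, hp⟩ => ⟨⟨hp.pos, by omega⟩, hp⟩⟩
  rw [hset]
  have h1 : ∑ p ∈ (Finset.range (n+1)).filter Nat.Prime, Real.log p
      = Real.log (primorial n) := by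
    rw [primorial]
    push_cast
    rw [Real.log_prod]
    intro p hp
    simp only [Finset.mem_filter] at hp
    exact_mod_cast hp.2.pos.ne'
  rw [h1]
  calc Real.log (primorial n) ≤ Real.log ((4:ℝ)^n) := by
        apply Real.log_le_log (by exact_mod_cast Nat.pos_of_ne_zero (primorial_pos n).ne')
        exact_mod_cast primorial_le_4_pow n
    _ = n * Real.log 4 := by rw [Real.log_pow]

lemma sum_log_le (n : ℕ) : ∑ m ∈ Finset.Ioc 0 n, Real.log m ≤ n * Real.log n := by
  calc ∑ m ∈ Finset.Ioc 0 n, Real.log m ≤ ∑ m ∈ Finset.Ioc 0 n, Real.log n := by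
        refine Finset.sum_le_sum fun m hm => ?_
        simp only [Finset.mem_Ioc] at hm
        exact Real.log_le_log (by exact_mod_cast hm.1) (by exact_mod_cast hm.2)
    _ = n * Real.log n := by rw [Finset.sum_const, Nat.card_Ioc, nsmul_eq_mul]; norm_num

lemma sum_log_ge (n : ℕ) (hn : 1 ≤ n) :
    (n:ℝ) * Real.log n - n + 1 ≤ ∑ m ∈ Finset.Ioc 0 n, Real.log m := by
  induction n with
  | zero => omega
  | succ k ih =>
    rcases Nat.eq_or_lt_of_le hn with h | h
    · simp [← h]
    · have hk : 1 ≤ k := by omega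
      have IH := ih hk
      rw [Finset.sum_Ioc_succ_top (by omega)]
      have key : ((k:ℝ)+1) * Real.log (k+1) - (k+1) + 1
          ≤ ((k:ℝ) * Real.log k - k + 1) + Real.log (k+1) := by
        have hlog : Real.log ((k+1)/k) ≤ (k+1)/(k:ℝ) - 1 :=
          Real.log_le_sub_one_of_pos (by positivity)
        have h2 : ((k+1):ℝ)/k - 1 = 1/k := by field_simp; ring
        rw [Real.log_div (by positivity) (by positivity), h2] at hlog
        have : (k:ℝ) * (Real.log (k+1) - Real.log k) ≤ 1 := by
          calc (k:ℝ) * (Real.log (k+1) - Real.log k) ≤ (k:ℝ) * (1/k) :=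
                mul_le_mul_of_nonneg_left hlog (by positivity)
            _ = 1 := by field_simp
        nlinarith
      push_cast
      push_cast at IH
      linarith

lemma log_le_two_sqrt {x : ℝ} (hx : 1 ≤ x) : Real.log x ≤ 2 * Real.sqrt x := by
  have h0 : (0:ℝ) ≤ x := by linarith
  have h1 : Real.log (Real.sqrt x) ≤ Real.sqrt x - 1 :=
    Real.log_le_sub_one_of_pos (Real.sqrt_pos.mpr (by linarith))
  have h2 : Real.log (Real.sqrt x) = Real.log x / 2 := Real.log_sqrt h0
  linarith

lemma summable_logsq : Summable (fun m : ℕ => Real.log m / (m:ℝ)^2) := by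
  have hs : Summable (fun m : ℕ => 2 * ((1:ℝ) / (m:ℝ)^((3:ℝ)/2))) :=
    (Real.summable_one_div_nat_rpow.mpr (by norm_num)).mul_left 2
  refine Summable.of_nonneg_of_le (fun m => ?_) (fun m => ?_) hs
  · have : (0:ℝ) ≤ Real.log m := Real.log_natCast_nonneg m
    positivity
  · rcases Nat.eq_zero_or_pos m with rfl | hm
    · simp
    · have hm1 : (1:ℝ) ≤ (m:ℝ) := by exact_mod_cast hm
      have hm0 : (0:ℝ) < (m:ℝ) := by linarith
      have hlog : Real.log m ≤ 2 * Real.sqrt m := log_le_two_sqrt hm1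
      have hsq : Real.sqrt m = (m:ℝ)^((1:ℝ)/2) := Real.sqrt_eq_rpow _
      rw [mul_one_div, div_le_div_iff₀ (by positivity) (by positivity)]
      calc Real.log m * (m:ℝ)^((3:ℝ)/2) ≤ 2 * (m:ℝ)^((1:ℝ)/2) * (m:ℝ)^((3:ℝ)/2) := by
              rw [hsq] at hlog
              exact mul_le_mul_of_nonneg_right hlog (by positivity)
        _ = 2 * (m:ℝ)^2 := by
              rw [mul_assoc, ← Real.rpow_add hm0]
              norm_num
        _ = 2 * (m:ℝ)^2 := by ring

lemma geom_half_le (n : ℕ) : ∑ k ∈ Finset.range n, ((1:ℝ)/2)^k ≤ 2 := by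
  have h := Summable.sum_le_tsum (Finset.range n) (fun k _ => by positivity)
    (summable_geometric_of_lt_one (by norm_num) (by norm_num : (1:ℝ)/2 < 1))
  rw [tsum_geometric_of_lt_one (by norm_num) (by norm_num)] at h
  norm_num at h
  exact h

lemma tail_bound : ∃ C : ℝ, 0 ≤ C ∧ ∀ n : ℕ,
    ∑ d ∈ (Finset.Ioc 0 n).filter (fun d => IsPrimePow d ∧ ¬ d.Prime), Λ d / d ≤ C := by
  have htsum0 : 0 ≤ ∑' m : ℕ, Real.log m / (m:ℝ)^2 :=
    tsum_nonneg (fun m => div_nonneg (Real.log_natCast_nonneg m) (by positivity))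
  refine ⟨8 * ∑' m : ℕ, Real.log m / (m:ℝ)^2, by positivity, fun n => ?_⟩
  set S := (Finset.Ioc 0 n).filter (fun d => IsPrimePow d ∧ ¬ d.Prime) with hS
  set G : ℕ × ℕ → ℝ := fun q => Real.log q.1 / (q.1:ℝ)^q.2 with hG
  set i : ℕ → ℕ × ℕ := fun d => (d.minFac, d.factorization d.minFac) with hi
  have hmem : ∀ d ∈ S, d.minFac.Prime ∧ 2 ≤ d.factorization d.minFac ∧
      d.minFac ^ d.factorization d.minFac = d := by
    intro d hd
    simp only [hS, Finset.mem_filter, Finset.mem_Ioc] at hd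
    obtain ⟨⟨hd0, hdn⟩, hpp, hnp⟩ := hd
    have hne1 : d ≠ 1 := hpp.ne_one
    have hp : d.minFac.Prime := Nat.minFac_prime hne1
    have heq : d.minFac ^ d.factorization d.minFac = d := hpp.minFac_pow_factorization_eq
    refine ⟨hp, ?_, heq⟩
    rcases Nat.lt_or_ge (d.factorization d.minFac) 2 with h | h
    · exfalso
      have h0 : d.factorization d.minFac = 0 ∨ d.factorization d.minFac = 1 := by omega
      rcases h0 with h0 | h0 <;> rw [h0] at heq
      · rw [pow_zero] at heq; exact hne1 heq.symm
      · rw [pow_one] at heq; rw [heq] at hp; exact hnp hp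
    · exact h
  have hinj : Set.InjOn i S := by
    intro d hd d' hd' h
    have h1 := (hmem d hd).2.2
    have h2 := (hmem d' hd').2.2
    rw [← h1, ← h2]
    rw [hi] at h
    simp only [Prod.mk.injEq] at h
    rw [h.2, h.1]
  have heach : ∀ d ∈ S, Λ d / d = G (i d) := by
    intro d hd
    obtain ⟨hp, hk2, heq⟩ := hmem d hd
    simp only [hS, Finset.mem_filter] at hd
    have hcast : ((d.minFac:ℝ))^(d.factorization d.minFac) = (d:ℝ) := by
      exact_mod_cast congrArg (Nat.cast : ℕ → ℝ) heq
    rw [vonMangoldt_apply, if_pos hd.2.1]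
    simp only [hG, hi]
    rw [hcast]
  have himage : S.image i ⊆ Finset.Icc 2 n ×ˢ Finset.Icc 2 n := by
    intro q hq
    simp only [Finset.mem_image] at hq
    obtain ⟨d, hd, rfl⟩ := hq
    obtain ⟨hp, hk2, heq⟩ := hmem d hd
    simp only [hS, Finset.mem_filter, Finset.mem_Ioc] at hd
    obtain ⟨⟨hd0, hdn⟩, -, -⟩ := hd
    simp only [Finset.mem_product, Finset.mem_Icc, hi]
    have hple : d.minFac ≤ d := Nat.minFac_le hd0
    have hkd : d.factorization d.minFac ≤ d := by
      have h2k : 2 ^ d.factorization d.minFac ≤ d := by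
        calc 2 ^ d.factorization d.minFac ≤ d.minFac ^ d.factorization d.minFac :=
              Nat.pow_le_pow_left hp.two_le _
          _ = d := heq
      have := Nat.lt_two_pow_self (n := d.factorization d.minFac)
      omega
    exact ⟨⟨hp.two_le, hple.trans hdn⟩, ⟨hk2, hkd.trans hdn⟩⟩
  have hGnonneg : ∀ q : ℕ × ℕ, 0 ≤ G q := fun q =>
    div_nonneg (Real.log_natCast_nonneg q.1) (by positivity)
  calc ∑ d ∈ S, Λ d / d = ∑ q ∈ S.image i, G q := by
        rw [Finset.sum_image (fun a ha b hb => hinj ha hb)]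
        exact Finset.sum_congr rfl heach
    _ ≤ ∑ q ∈ Finset.Icc 2 n ×ˢ Finset.Icc 2 n, G q :=
        Finset.sum_le_sum_of_subset_of_nonneg himage (fun q _ _ => hGnonneg q)
    _ = ∑ p ∈ Finset.Icc 2 n, ∑ k ∈ Finset.Icc 2 n, Real.log p / (p:ℝ)^k :=
        by rw [Finset.sum_product]
    _ ≤ ∑ p ∈ Finset.Icc 2 n, 8 * (Real.log p / (p:ℝ)^2) := by
        refine Finset.sum_le_sum fun p hp => ?_
        simp only [Finset.mem_Icc] at hp
        have hp2 : (2:ℝ) ≤ (p:ℝ) := by exact_mod_cast hp.1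
        have hp0 : (0:ℝ) < (p:ℝ) := by linarith
        have hlp : 0 ≤ Real.log p := Real.log_natCast_nonneg p
        calc ∑ k ∈ Finset.Icc 2 n, Real.log p / (p:ℝ)^k
            ≤ ∑ k ∈ Finset.Icc 2 n, Real.log p * (4 / (p:ℝ)^2 * ((1:ℝ)/2)^k) := by
              refine Finset.sum_le_sum fun k hk => ?_
              simp only [Finset.mem_Icc] at hk
              obtain ⟨j, rfl⟩ : ∃ j, k = j + 2 := ⟨k - 2, by omega⟩
              have hkey : (p:ℝ)^2 * 2^(j+2) ≤ 4 * (p:ℝ)^(j+2) := by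
                have h2j : (2:ℝ)^j ≤ (p:ℝ)^j := pow_le_pow_left₀ (by norm_num) hp2 j
                calc (p:ℝ)^2 * 2^(j+2) = 4 * ((p:ℝ)^2 * 2^j) := by ring
                  _ ≤ 4 * ((p:ℝ)^2 * (p:ℝ)^j) := by nlinarith
                  _ = 4 * (p:ℝ)^(j+2) := by ring
              rw [div_eq_mul_inv]
              refine mul_le_mul_of_nonneg_left ?_ hlp
              rw [div_pow, one_pow, div_mul_div_comm, mul_one]
              rw [inv_eq_one_div, div_le_div_iff₀ (by positivity) (by positivity)]
              linarith [hkey]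
          _ = Real.log p * (4 / (p:ℝ)^2) * ∑ k ∈ Finset.Icc 2 n, ((1:ℝ)/2)^k := by
              rw [Finset.mul_sum]
              exact Finset.sum_congr rfl fun k _ => by ring
          _ ≤ Real.log p * (4 / (p:ℝ)^2) * 2 := by
              refine mul_le_mul_of_nonneg_left ?_ (by positivity)
              calc ∑ k ∈ Finset.Icc 2 n, ((1:ℝ)/2)^k
                  ≤ ∑ k ∈ Finset.range (n+1), ((1:ℝ)/2)^k := by
                    refine Finset.sum_le_sum_of_subset_of_nonneg ?_ (fun k _ _ => by positivity)
                    intro k hk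
                    simp only [Finset.mem_Icc] at hk
                    simp only [Finset.mem_range]
                    omega
                _ ≤ 2 := geom_half_le (n+1)
          _ = 8 * (Real.log p / (p:ℝ)^2) := by ring
    _ ≤ 8 * ∑' m : ℕ, Real.log m / (m:ℝ)^2 := by
        rw [← Finset.mul_sum]
        refine mul_le_mul_of_nonneg_left ?_ (by norm_num)
        exact Summable.sum_le_tsum _ (fun m _ => div_nonneg (Real.log_natCast_nonneg m) (by positivity))
          summable_logsq
noncomputable def Phi (n : ℕ) : ℝ := ∑ p ∈ (Finset.Ioc 0 n).filter Nat.Prime, Real.log p / p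


theorem mertens : ∃ C : ℝ, 0 ≤ C ∧ ∀ n : ℕ, 1 ≤ n → |Phi n - Real.log n| ≤ C := by
  obtain ⟨Ct, hCt0, hCt⟩ := tail_bound
  refine ⟨Ct + 1 + Real.log 4, by positivity, fun n hn => ?_⟩
  have hn0 : (0:ℝ) < n := by exact_mod_cast hn
  -- Upper bound : Phi n ≤ log n + log 4
  have hupper : Phi n ≤ Real.log n + Real.log 4 := by
    have h1 : (n:ℝ) * Phi n ≤ ∑ p ∈ (Finset.Ioc 0 n).filter Nat.Prime,
        Real.log p * ((n / p : ℕ) : ℝ) + n * Real.log 4 := by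
      have : (n:ℝ) * Phi n = ∑ p ∈ (Finset.Ioc 0 n).filter Nat.Prime,
          Real.log p * ((n:ℝ) / p) := by
        rw [Phi, Finset.mul_sum]
        exact Finset.sum_congr rfl fun p _ => by ring
      rw [this]
      have h2 : ∑ p ∈ (Finset.Ioc 0 n).filter Nat.Prime, Real.log p * ((n:ℝ)/p)
          ≤ ∑ p ∈ (Finset.Ioc 0 n).filter Nat.Prime,
              (Real.log p * ((n / p : ℕ) : ℝ) + Real.log p) := by
        refine Finset.sum_le_sum fun p hp => ?_
        simp only [Finset.mem_filter, Finset.mem_Ioc] at hp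
        have hp0 : 0 < p := hp.1.1
        have hp0' : (0:ℝ) < p := by exact_mod_cast hp0
        have hlp : 0 ≤ Real.log p := Real.log_natCast_nonneg p
        have hfloor : (n:ℝ)/p ≤ ((n / p : ℕ) : ℝ) + 1 := by
          have hdm := Nat.div_add_mod n p
          have hmod : n % p < p := Nat.mod_lt n hp0
          have : (n:ℝ) < p * ((n/p : ℕ):ℝ) + p := by
            have hc : ((p * (n/p) + n % p : ℕ) : ℝ) = (n:ℝ) := by rw [hdm]
            push_cast at hc
            have : ((n % p : ℕ):ℝ) < (p:ℝ) := by exact_mod_cast hmod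
            linarith
          rw [div_le_iff₀ hp0']
          nlinarith
        nlinarith
      rw [Finset.sum_add_distrib] at h2
      have := theta_le n
      linarith
    have h3 : ∑ p ∈ (Finset.Ioc 0 n).filter Nat.Prime, Real.log p * ((n / p : ℕ) : ℝ)
        ≤ ∑ d ∈ Finset.Ioc 0 n, Λ d * ((n / d : ℕ) : ℝ) := by
      have heq : ∀ p ∈ (Finset.Ioc 0 n).filter Nat.Prime,
          Real.log p * ((n / p : ℕ) : ℝ) = Λ p * ((n / p : ℕ) : ℝ) := by
        intro p hp
        simp only [Finset.mem_filter] at hp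
        rw [vonMangoldt_apply_prime hp.2]
      rw [Finset.sum_congr rfl heq]
      refine Finset.sum_le_sum_of_subset_of_nonneg (Finset.filter_subset _ _) fun d _ _ => ?_
      exact mul_nonneg vonMangoldt_nonneg (by positivity)
    rw [← sum_log_eq] at h3
    have h4 := sum_log_le n
    have : (n:ℝ) * Phi n ≤ n * Real.log n + n * Real.log 4 := by linarith
    calc Phi n = (n:ℝ) * Phi n / n := by field_simp
      _ ≤ (n * Real.log n + n * Real.log 4) / n := by
          exact div_le_div_of_nonneg_right this hn0.le
      _ = Real.log n + Real.log 4 := by field_simp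
  -- Lower bound : Phi n ≥ log n - 1 - Ct
  have hlower : Real.log n - 1 - Ct ≤ Phi n := by
    have h1 : ∑ d ∈ Finset.Ioc 0 n, Λ d * ((n / d : ℕ) : ℝ)
        ≤ (n:ℝ) * ∑ d ∈ Finset.Ioc 0 n, Λ d / d := by
      rw [Finset.mul_sum]
      refine Finset.sum_le_sum fun d hd => ?_
      simp only [Finset.mem_Ioc] at hd
      have hd0 : (0:ℝ) < d := by exact_mod_cast hd.1
      have hfl : ((n / d : ℕ) : ℝ) ≤ (n:ℝ)/d := Nat.cast_div_le
      calc Λ d * ((n / d : ℕ) : ℝ) ≤ Λ d * ((n:ℝ)/d) :=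
            mul_le_mul_of_nonneg_left hfl vonMangoldt_nonneg
        _ = (n:ℝ) * (Λ d / d) := by ring
    have hsplit : ∑ d ∈ Finset.Ioc 0 n, Λ d / d
        = Phi n + ∑ d ∈ (Finset.Ioc 0 n).filter (fun d => ¬ d.Prime), Λ d / d := by
      rw [← Finset.sum_filter_add_sum_filter_not (Finset.Ioc 0 n) Nat.Prime (fun d => Λ d / (d:ℝ))]
      congr 1
      rw [Phi]
      refine Finset.sum_congr rfl fun p hp => ?_
      simp only [Finset.mem_filter] at hp
      rw [vonMangoldt_apply_prime hp.2]
    have htail : ∑ d ∈ (Finset.Ioc 0 n).filter (fun d => ¬ d.Prime), Λ d / d ≤ Ct := by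
      have hsub : ∑ d ∈ (Finset.Ioc 0 n).filter (fun d => ¬ d.Prime), Λ d / d
          = ∑ d ∈ (Finset.Ioc 0 n).filter (fun d => IsPrimePow d ∧ ¬ d.Prime), Λ d / d := by
        refine (Finset.sum_subset ?_ ?_).symm
        · intro d hd
          simp only [Finset.mem_filter] at hd ⊢
          exact ⟨hd.1, hd.2.2⟩
        · intro d hd hnd
          simp only [Finset.mem_filter] at hd hnd
          have : ¬ IsPrimePow d := by tauto
          rw [vonMangoldt_eq_zero_iff.mpr this, zero_div]
      rw [hsub]
      exact hCt n
    have h2 := sum_log_ge n hn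
    rw [sum_log_eq] at h2
    have h3 : (n:ℝ) * Real.log n - n + 1 ≤ (n:ℝ) * (Phi n + Ct) := by
      calc (n:ℝ) * Real.log n - n + 1 ≤ ∑ d ∈ Finset.Ioc 0 n, Λ d * ((n / d : ℕ) : ℝ) := h2
        _ ≤ (n:ℝ) * ∑ d ∈ Finset.Ioc 0 n, Λ d / d := h1
        _ ≤ (n:ℝ) * (Phi n + Ct) := by
            rw [hsplit]
            exact mul_le_mul_of_nonneg_left (by linarith) (le_of_lt hn0)
    nlinarith
  rw [abs_le]
  have hl4 : 0 ≤ Real.log 4 := Real.log_nonneg (by norm_num)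
  constructor <;> [linarith; linarith]

open MeasureTheory Real


section B
variable (fhat : ℝ → ℝ) (L : ℝ) (z : ℂ)

noncomputable def Fc : ℝ → ℂ := fun t => (fhat (Real.log t / L) : ℂ) * (t:ℂ)^(-z)

noncomputable def Fd : ℝ → ℂ := fun t =>
  ((deriv fhat (Real.log t / L) * (1/(t*L)) : ℝ) : ℂ) * (t:ℂ)^(-z)
    + (fhat (Real.log t / L) : ℂ) * (-z * (t:ℂ)^(-z-1))

lemma keyDeriv (hsmooth : ContDiff ℝ (⊤ : ℕ∞) fhat) {t : ℝ} (ht : 0 < t) :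
    HasDerivAt (Fc fhat L z) (Fd fhat L z t) t := by
  have h1 : HasDerivAt (fun t : ℝ => Real.log t / L) (1/(t*L)) t := by
    have := (Real.hasDerivAt_log ht.ne').div_const L
    rw [show 1/(t*L) = t⁻¹/L by rw [one_div, mul_inv, div_eq_mul_inv]]
    exact this
  have h2 : HasDerivAt fhat (deriv fhat (Real.log t / L)) (Real.log t / L) :=
    ((hsmooth.differentiable (by simp)) _).hasDerivAt
  have h3 : HasDerivAt (fun t : ℝ => fhat (Real.log t / L))
      (deriv fhat (Real.log t / L) * (1/(t*L))) t := h2.comp t h1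
  have h4 : HasDerivAt (fun t : ℝ => (fhat (Real.log t / L) : ℂ))
      (((deriv fhat (Real.log t / L) * (1/(t*L)) : ℝ)) : ℂ) t := h3.ofReal_comp
  have h6 : HasDerivAt (fun t : ℝ => ((t : ℝ) : ℂ)) 1 t := by
    exact HasDerivAt.congr_deriv (hasDerivAt_id t).ofReal_comp (by simp)
  have h5 : HasDerivAt (fun t : ℝ => ((t:ℝ):ℂ)^(-z)) (-z * (t:ℂ)^(-z-1)) t := by
    have hsp : ((t:ℝ):ℂ) ∈ Complex.slitPlane := Complex.ofReal_mem_slitPlane.2 ht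
    have hg : HasDerivAt (fun w : ℂ => w^(-z)) (-z * (t:ℂ)^(-z-1) * 1) ((t:ℝ):ℂ) :=
      (hasDerivAt_id ((t:ℝ):ℂ)).cpow_const hsp
    simpa using hg.comp_ofReal
  exact h4.mul h5

lemma FdCont (hsmooth : ContDiff ℝ (⊤ : ℕ∞) fhat) (hL : L ≠ 0) :
    ContinuousOn (Fd fhat L z) (Set.Ioi 0) := by
  have hof : Continuous (Complex.ofReal) := Complex.continuous_ofReal
  have hlog : ContinuousOn (fun t : ℝ => Real.log t / L) (Set.Ioi 0) :=
    (Real.continuousOn_log.mono (by intro x hx; simp at hx ⊢; exact ne_of_gt hx)).div_const L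
  have hcpow : ∀ w : ℂ, ContinuousOn (fun t : ℝ => ((t:ℝ):ℂ)^w) (Set.Ioi 0) := by
    intro w
    apply ContinuousOn.cpow
    · exact hof.continuousOn
    · exact continuousOn_const
    · intro x hx
      exact Or.inl (by simpa using hx)
  have hd : Continuous (deriv fhat) := (contDiff_infty_iff_deriv.mp (hsmooth.of_le (by simp))).2.continuous
  have hinv : ContinuousOn (fun t : ℝ => 1/(t*L)) (Set.Ioi 0) := by
    apply ContinuousOn.div continuousOn_const ((continuousOn_id).mul continuousOn_const)
    intro x hx
    simp only [Set.mem_Ioi] at hx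
    exact mul_ne_zero (ne_of_gt hx) hL
  apply ContinuousOn.add
  · exact (hof.comp_continuousOn ((hd.comp_continuousOn hlog).mul hinv)).mul (hcpow (-z))
  · exact (hof.comp_continuousOn (hsmooth.continuous.comp_continuousOn hlog)).mul
      (continuousOn_const.mul (hcpow (-z-1)))

lemma FcCont (hsmooth : ContDiff ℝ (⊤ : ℕ∞) fhat) :
    ContinuousOn (Fc fhat L z) (Set.Ioi 0) := by
  have hof : Continuous (Complex.ofReal) := Complex.continuous_ofReal
  have hlog : ContinuousOn (fun t : ℝ => Real.log t / L) (Set.Ioi 0) :=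
    (Real.continuousOn_log.mono (by intro x hx; simp at hx ⊢; exact ne_of_gt hx)).div_const L
  have hcpow : ContinuousOn (fun t : ℝ => ((t:ℝ):ℂ)^(-z)) (Set.Ioi 0) := by
    apply ContinuousOn.cpow hof.continuousOn continuousOn_const
    intro x hx
    exact Complex.ofReal_mem_slitPlane.2 hx
  exact (hof.comp_continuousOn (hsmooth.continuous.comp_continuousOn hlog)).mul hcpow

end B

set_option maxHeartbeats 2000000 in
theorem stmt17 (fhat : ℝ → ℝ) (hsmooth : ContDiff ℝ (⊤ : ℕ∞) fhat)
    (hcpt : HasCompactSupport fhat) (hsupp : Function.support fhat ⊆ Set.Ici 0) :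
    ∃ K : ℝ, ∀ T : ℝ, 3 ≤ T → ∀ z : ℂ, ‖z‖ ≤ 1 / Real.log T →
      ‖(∑' p : Nat.Primes,
            ((Real.log p / p : ℝ) : ℂ) * (fhat (Real.log p / Real.log T) : ℂ)
              * ((p : ℕ) : ℂ) ^ (-z))
          - (Real.log T : ℂ) *
            ∫ y in Set.Ioi (0 : ℝ), (fhat y : ℂ) * (T : ℂ) ^ (-(y : ℂ) * z)‖ ≤ K := by
  classical
  obtain ⟨C₀, hC₀0, hC₀⟩ := mertens
  obtain ⟨M₀, hM₀⟩ := hcpt.exists_bound_of_continuous hsmooth.continuous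
  have hdcont : Continuous (deriv fhat) :=
    (contDiff_infty_iff_deriv.mp (hsmooth.of_le (by simp))).2.continuous
  obtain ⟨M₁, hM₁⟩ := (hcpt.deriv).exists_bound_of_continuous hdcont
  have hM₀0 : 0 ≤ M₀ := le_trans (norm_nonneg _) (hM₀ 0)
  have hM₁0 : 0 ≤ M₁ := le_trans (norm_nonneg _) (hM₁ 0)
  obtain ⟨R, hR⟩ := hcpt.isCompact.bddAbove
  set A : ℝ := max R 0 + 1 with hA
  have hA1 : 1 ≤ A := by
    have : (0:ℝ) ≤ max R 0 := le_max_right R 0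
    simp only [hA]; linarith
  have hA0 : 0 < A := by linarith
  have hAzero : ∀ y : ℝ, A ≤ y → fhat y = 0 := by
    intro y hy
    by_contra h
    have h1 : y ∈ tsupport fhat := subset_tsupport fhat (by simpa [Function.mem_support] using h)
    have h2 : y ≤ R := hR h1
    have h3 : y ≤ max R 0 := le_trans h2 (le_max_left _ _)
    linarith
  refine ⟨(C₀ + 1) * ((M₀ + M₁) * Real.exp A * A), fun T hT z hz => ?_⟩
  set L := Real.log T with hLdef
  have hT0 : (0:ℝ) < T := by linarith
  have hL1 : 1 ≤ L := by
    rw [hLdef, Real.le_log_iff_exp_le hT0]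
    calc Real.exp 1 ≤ 2.7182818286 := le_of_lt Real.exp_one_lt_d9
      _ ≤ 3 := by norm_num
      _ ≤ T := hT
  have hL0 : 0 < L := lt_of_lt_of_le one_pos hL1
  set X := Real.exp (A * L) with hXdef
  have hlogX : Real.log X = A * L := Real.log_exp _
  have hX1 : 1 < X := by
    rw [hXdef]
    exact Real.one_lt_exp_iff.mpr (by positivity)
  have hX0 : 0 < X := by linarith
  set N := ⌊X⌋₊ with hNdef
  have hN1 : 1 ≤ N := Nat.le_floor (by exact_mod_cast hX1.le)
  have hXN : X < N + 1 := Nat.lt_floor_add_one X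
  have hNX : (N:ℝ) ≤ X := Nat.floor_le hX0.le
  set F := Fc fhat L z with hFdef
  set c : ℕ → ℂ := fun k => if k.Prime then ((Real.log k / k : ℝ) : ℂ) else 0 with hcdef
  have hIccIoc : ∀ n : ℕ, (Finset.Icc 0 n).filter Nat.Prime = (Finset.Ioc 0 n).filter Nat.Prime := by
    intro n
    ext p
    simp only [Finset.mem_filter, Finset.mem_Icc, Finset.mem_Ioc]
    exact ⟨fun ⟨⟨_, h2⟩, hp⟩ => ⟨⟨hp.pos, h2⟩, hp⟩, fun ⟨⟨h1, h2⟩, hp⟩ => ⟨⟨by omega, h2⟩, hp⟩⟩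
  have hPhiC : ∀ n : ℕ, ∑ k ∈ Finset.Icc 0 n, c k = ((Phi n : ℝ) : ℂ) := by
    intro n
    rw [hcdef]
    rw [Finset.sum_ite, Finset.sum_const_zero, add_zero, hIccIoc n, Phi]
    push_cast
    rfl
  have hFX : F X = 0 := by
    rw [hFdef]
    simp only [Fc]
    rw [hlogX, mul_div_assoc, div_self hL0.ne', mul_one, hAzero A le_rfl]
    simp
  have hderivF : ∀ t : ℝ, 0 < t → deriv F t = Fd fhat L z t := fun t ht =>
    (keyDeriv fhat L z hsmooth ht).deriv
  have hsub1X : Set.Icc (1:ℝ) X ⊆ Set.Ioi 0 := fun t ht => lt_of_lt_of_le one_pos ht.1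
  have hdFcont : ContinuousOn (deriv F) (Set.Icc 1 X) :=
    ((FdCont fhat L z hsmooth hL0.ne').mono hsub1X).congr
      (fun t ht => hderivF t (hsub1X ht))
  have hdFint : IntegrableOn (deriv F) (Set.Icc 1 X) := hdFcont.integrableOn_Icc
  have hlogCont : ContinuousOn (fun t : ℝ => ((Real.log t : ℝ) : ℂ)) (Set.Icc 1 X) :=
    Complex.continuous_ofReal.comp_continuousOn
      (Real.continuousOn_log.mono (fun t ht => ne_of_gt (hsub1X ht)))
  -- Step 2 : Abel summation
  have habel : ∑ k ∈ Finset.Ioc 1 N, F k * c k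
      = - ∫ t in Set.Ioc (1:ℝ) X, deriv F t * ((Phi ⌊t⌋₊ : ℝ) : ℂ) := by
    have hf_diff : ∀ t ∈ Set.Icc (1:ℝ) X, DifferentiableAt ℝ F t := fun t ht =>
      (keyDeriv fhat L z hsmooth (hsub1X ht)).differentiableAt
    have h := sum_mul_eq_sub_sub_integral_mul c zero_le_one hX1.le hf_diff hdFint
    rw [Nat.floor_one] at h
    have hPhi1 : Phi 1 = 0 := by
      have he : (Finset.Ioc 0 1).filter Nat.Prime = ∅ := by
        ext p
        simp only [Finset.mem_filter, Finset.mem_Ioc, Finset.notMem_empty, iff_false]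
        rintro ⟨⟨h1, h2⟩, hp⟩
        have : p = 1 := by omega
        rw [this] at hp
        exact Nat.not_prime_one hp
      rw [Phi, he, Finset.sum_empty]
    simp only [hPhiC] at h
    rw [h, hFX, hPhi1]
    simp
  -- Step 1 : tsum is the finite sum
  have hsum : (∑' p : Nat.Primes,
        ((Real.log p / p : ℝ) : ℂ) * (fhat (Real.log p / Real.log T) : ℂ)
          * ((p : ℕ) : ℂ) ^ (-z)) = ∑ k ∈ Finset.Ioc 1 N, F k * c k := by
    have hzero : ∀ p : Nat.Primes,
        p ∉ (Finset.Ioc 1 N).subtype (fun k => Nat.Prime k) →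
        ((Real.log p / p : ℝ) : ℂ) * (fhat (Real.log p / Real.log T) : ℂ)
          * ((p : ℕ) : ℂ) ^ (-z) = 0 := by
      intro p hp
      have hp' : (p:ℕ) ∉ Finset.Ioc 1 N := fun hq => hp (Finset.mem_subtype.mpr hq)
      rw [Finset.mem_Ioc] at hp'
      push_neg at hp'
      have hp2 : N < (p:ℕ) := hp' p.2.one_lt
      have hpX : X < ((p:ℕ):ℝ) := by
        refine lt_of_lt_of_le hXN ?_
        exact_mod_cast Nat.succ_le_of_lt hp2
      have hflog : A ≤ Real.log ((p:ℕ):ℝ) / L := by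
        rw [le_div_iff₀ hL0]
        calc A * L = Real.log X := hlogX.symm
          _ ≤ Real.log ((p:ℕ):ℝ) := Real.log_le_log hX0 hpX.le
      have : fhat (Real.log ((p:ℕ):ℝ) / L) = 0 := hAzero _ hflog
      rw [this]
      simp
    rw [tsum_eq_sum hzero]
    calc ∑ b ∈ (Finset.Ioc 1 N).subtype (fun k => Nat.Prime k),
          ((Real.log b / b : ℝ) : ℂ) * (fhat (Real.log b / Real.log T) : ℂ)
            * ((b : ℕ) : ℂ) ^ (-z)
        = ∑ b ∈ (Finset.Ioc 1 N).subtype (fun k => Nat.Prime k),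
            (fun k : ℕ => ((Real.log k / k : ℝ) : ℂ) * (fhat (Real.log k / Real.log T) : ℂ)
              * ((k : ℕ) : ℂ) ^ (-z)) (Subtype.val b) :=
          Finset.sum_congr rfl (fun b _ => rfl)
      _ = ∑ k ∈ (Finset.Ioc 1 N).filter Nat.Prime,
            ((Real.log k / k : ℝ) : ℂ) * (fhat (Real.log k / Real.log T) : ℂ)
              * ((k : ℕ) : ℂ) ^ (-z) := by
          exact Finset.sum_subtype_eq_sum_filter
            (fun k : ℕ => ((Real.log k / k : ℝ) : ℂ) * (fhat (Real.log k / Real.log T) : ℂ)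
              * ((k : ℕ) : ℂ) ^ (-z))
      _ = ∑ k ∈ Finset.Ioc 1 N, F k * c k := by
          rw [Finset.sum_filter]
          refine Finset.sum_congr rfl fun k hk => ?_
          by_cases hkp : k.Prime
          · rw [if_pos hkp, hFdef, hcdef]
            simp only [Fc, if_pos hkp]
            push_cast
            ring
          · rw [if_neg hkp, hFdef, hcdef]
            simp only [if_neg hkp, mul_zero]
  -- Step 3 : the integral side
  have hint : (Real.log T : ℂ) * (∫ y in Set.Ioi (0:ℝ), (fhat y : ℂ) * (T : ℂ) ^ (-(y:ℂ) * z))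
      = - ∫ t in Set.Ioc (1:ℝ) X, deriv F t * ((Real.log t : ℝ) : ℂ) := by
    set g : ℝ → ℂ := fun y => (fhat y : ℂ) * (T : ℂ) ^ (-(y:ℂ) * z) with hgdef
    have hTc0 : (T:ℂ) ≠ 0 := by
      simp only [ne_eq, Complex.ofReal_eq_zero]
      exact hT0.ne'
    have hgcont : Continuous g := by
      apply Continuous.mul (Complex.continuous_ofReal.comp hsmooth.continuous)
      apply Continuous.cpow continuous_const
        ((Complex.continuous_ofReal.neg).mul continuous_const)
      intro x
      exact Complex.ofReal_mem_slitPlane.2 hT0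
    have hgzero : Set.EqOn g 0 (Set.Ioi A) := by
      intro y hy
      simp only [hgdef, Pi.zero_apply, hAzero y (le_of_lt hy)]
      simp
    -- (a) reduce to interval integral on [0, A]
    have ha : ∫ y in Set.Ioi (0:ℝ), g y = ∫ y in (0:ℝ)..A, g y := by
      rw [intervalIntegral.integral_of_le (by linarith : (0:ℝ) ≤ A)]
      rw [← Set.Ioc_union_Ioi_eq_Ioi (by linarith : (0:ℝ) ≤ A)]
      rw [setIntegral_union (Set.Ioc_disjoint_Ioi le_rfl) measurableSet_Ioi
        (hgcont.integrableOn_Ioc) ((integrableOn_congr_fun hgzero measurableSet_Ioi).mpr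
          (integrableOn_zero))]
      rw [setIntegral_congr_fun measurableSet_Ioi hgzero]
      simp
    -- (b) change of variables t = exp (y L)
    set φ : ℝ → ℝ := fun y => Real.exp (y * L) with hφdef
    set φ' : ℝ → ℝ := fun y => Real.exp (y * L) * L with hφ'def
    have hφd : ∀ y ∈ Set.uIcc (0:ℝ) A, HasDerivAt φ (φ' y) y := by
      intro y _
      have := ((hasDerivAt_id y).mul_const L).exp
      simpa [hφdef, hφ'def] using this
    have hφ'cont : ContinuousOn φ' (Set.uIcc 0 A) :=
      ((Real.continuous_exp.comp (continuous_id.mul continuous_const)).mul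
        continuous_const).continuousOn
    set h : ℝ → ℂ := fun t => Fc fhat L z t * (((t⁻¹ : ℝ)) : ℂ) with hhdef
    have hhcont : ContinuousOn h (Set.Ioi 0) := by
      apply (FcCont fhat L z hsmooth).mul
      apply Complex.continuous_ofReal.comp_continuousOn
      intro x hx
      exact (continuousAt_inv₀ (ne_of_gt hx)).continuousWithinAt
    have himg : φ '' Set.uIcc 0 A ⊆ Set.Ioi 0 := by
      rintro _ ⟨y, -, rfl⟩
      exact Real.exp_pos _
    have hb : ∫ y in (0:ℝ)..A, φ' y • (h ∘ φ) y = ∫ t in (1:ℝ)..X, h t := by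
      have hcov := intervalIntegral.integral_comp_smul_deriv' hφd hφ'cont (hhcont.mono himg)
      have hφ0 : φ 0 = 1 := by simp [hφdef]
      have hφA : φ A = X := by simp [hφdef, hXdef]
      rw [hφ0, hφA] at hcov
      exact hcov
    have hpt : ∀ y : ℝ, φ' y • (h ∘ φ) y = (Real.log T : ℂ) * g y := by
      intro y
      have hey0 : Real.exp (y * L) ≠ 0 := (Real.exp_pos _).ne'
      have heyc0 : ((Real.exp (y * L) : ℝ) : ℂ) ≠ 0 := by
        simp only [ne_eq, Complex.ofReal_eq_zero]
        exact hey0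
      have hlog' : Real.log (Real.exp (y * L)) / L = y := by
        rw [Real.log_exp]
        field_simp
      have hcp : ((Real.exp (y * L) : ℝ) : ℂ) ^ (-z) = (T : ℂ) ^ (-(y:ℂ) * z) := by
        rw [Complex.cpow_def_of_ne_zero heyc0, Complex.cpow_def_of_ne_zero hTc0]
        congr 1
        rw [← Complex.ofReal_log (Real.exp_pos _).le, ← Complex.ofReal_log hT0.le,
          Real.log_exp, ← hLdef]
        push_cast
        ring
      simp only [Function.comp, hφdef, hφ'def, hhdef, Fc, hgdef, hlog', hcp]
      rw [Complex.real_smul, ← hLdef]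
      push_cast
      have : ((Real.exp (y * L) : ℝ) : ℂ)⁻¹ * ((Real.exp (y * L) : ℝ) : ℂ) = 1 :=
        inv_mul_cancel₀ heyc0
      field_simp
    -- (c) integration by parts
    have hintInt : IntervalIntegrable
        (fun t => deriv F t * ((Real.log t : ℝ) : ℂ) + h t) volume 1 X := by
      rw [intervalIntegrable_iff_integrableOn_Icc_of_le hX1.le]
      exact ((hdFcont.mul hlogCont).add (hhcont.mono hsub1X)).integrableOn_Icc
    have hprod : ∀ t ∈ Set.uIcc (1:ℝ) X,
        HasDerivAt (fun t => Fc fhat L z t * ((Real.log t : ℝ) : ℂ))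
          (deriv F t * ((Real.log t : ℝ) : ℂ) + h t) t := by
      intro t ht
      rw [Set.uIcc_of_le hX1.le] at ht
      have ht0 : 0 < t := hsub1X ht
      have h1 := keyDeriv fhat L z hsmooth ht0
      have h2 : HasDerivAt (fun t : ℝ => ((Real.log t : ℝ) : ℂ)) (((t⁻¹ : ℝ)) : ℂ) t :=
        (Real.hasDerivAt_log ht0.ne').ofReal_comp
      have h3 := h1.mul h2
      rw [hderivF t ht0]
      convert h3 using 1
      all_goals rfl
    have hIBP := intervalIntegral.integral_eq_sub_of_hasDerivAt hprod hintInt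
    have hbd : Fc fhat L z X * ((Real.log X : ℝ) : ℂ)
        - Fc fhat L z 1 * ((Real.log 1 : ℝ) : ℂ) = 0 := by
      have : Fc fhat L z X = 0 := hFX
      rw [this, Real.log_one]
      simp
    rw [hbd] at hIBP
    have hint1 : IntervalIntegrable (fun t => deriv F t * ((Real.log t : ℝ) : ℂ)) volume 1 X := by
      rw [intervalIntegrable_iff_integrableOn_Icc_of_le hX1.le]
      exact (hdFcont.mul hlogCont).integrableOn_Icc
    have hint2 : IntervalIntegrable h volume 1 X := by
      rw [intervalIntegrable_iff_integrableOn_Icc_of_le hX1.le]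
      exact (hhcont.mono hsub1X).integrableOn_Icc
    rw [intervalIntegral.integral_add hint1 hint2] at hIBP
    have hc' : ∫ t in (1:ℝ)..X, h t
        = - ∫ t in (1:ℝ)..X, deriv F t * ((Real.log t : ℝ) : ℂ) := by
      linear_combination hIBP
    calc (Real.log T : ℂ) * ∫ y in Set.Ioi (0:ℝ), g y
        = ∫ y in (0:ℝ)..A, (Real.log T : ℂ) * g y := by
          rw [ha, intervalIntegral.integral_const_mul]
      _ = ∫ y in (0:ℝ)..A, φ' y • (h ∘ φ) y :=
          intervalIntegral.integral_congr (fun y _ => (hpt y).symm)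
      _ = ∫ t in (1:ℝ)..X, h t := hb
      _ = - ∫ t in (1:ℝ)..X, deriv F t * ((Real.log t : ℝ) : ℂ) := hc'
      _ = - ∫ t in Set.Ioc (1:ℝ) X, deriv F t * ((Real.log t : ℝ) : ℂ) := by
          rw [intervalIntegral.integral_of_le hX1.le]
  -- Step 4 : combine and bound
  rw [hsum, habel, hint]
  rw [sub_neg_eq_add, neg_add_eq_sub]
  have hcombine : (∫ t in Set.Ioc (1:ℝ) X, deriv F t * ((Real.log t : ℝ) : ℂ))
      - (∫ t in Set.Ioc (1:ℝ) X, deriv F t * ((Phi ⌊t⌋₊ : ℝ) : ℂ))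
      = ∫ t in Set.Ioc (1:ℝ) X, deriv F t * ((Real.log t - Phi ⌊t⌋₊ : ℝ) : ℂ) := by
    have hf : IntegrableOn (fun t => deriv F t * ((Real.log t : ℝ) : ℂ)) (Set.Ioc 1 X) :=
      ((hdFcont.mul hlogCont).integrableOn_Icc).mono_set Set.Ioc_subset_Icc_self
    have hg : IntegrableOn (fun t => deriv F t * ((Phi ⌊t⌋₊ : ℝ) : ℂ)) (Set.Ioc 1 X) := by
      have hmeas : AEStronglyMeasurable (fun t : ℝ => ((Phi ⌊t⌋₊ : ℝ) : ℂ))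
          (volume.restrict (Set.Ioc 1 X)) :=
        by
          have hm1 : Measurable (fun n : ℕ => ((Phi n : ℝ) : ℂ)) := measurable_from_top
          exact (hm1.comp Nat.measurable_floor).aestronglyMeasurable
      have hbound : ∀ᵐ t ∂(volume.restrict (Set.Ioc (1:ℝ) X)),
          ‖((Phi ⌊t⌋₊ : ℝ) : ℂ)‖ ≤ C₀ + Real.log X := by
        rw [ae_restrict_iff' measurableSet_Ioc]
        refine Filter.Eventually.of_forall fun t ht => ?_
        have ht0 : (0:ℝ) < t := lt_trans one_pos ht.1
        have hn1 : 1 ≤ ⌊t⌋₊ := Nat.le_floor (by exact_mod_cast ht.1.le)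
        have hnt : ((⌊t⌋₊ : ℕ) : ℝ) ≤ t := Nat.floor_le ht0.le
        have h1 := hC₀ ⌊t⌋₊ hn1
        have h2 : Real.log (⌊t⌋₊ : ℝ) ≤ Real.log X :=
          Real.log_le_log (by exact_mod_cast hn1) (le_trans hnt ht.2)
        rw [Complex.norm_real, Real.norm_eq_abs]
        have h3 := abs_le.mp h1
        rw [abs_le]
        have h4 : (0:ℝ) ≤ Real.log (⌊t⌋₊ : ℝ) := Real.log_natCast_nonneg _
        have h5 : (0:ℝ) ≤ Real.log X := le_trans h4 h2
        constructor <;> nlinarith [h3.1, h3.2]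
      have := ((hdFint.mono_set Set.Ioc_subset_Icc_self).bdd_mul hmeas hbound)
      exact this.congr (Filter.Eventually.of_forall fun x => mul_comm _ _)
    rw [← integral_sub hf hg]
    refine setIntegral_congr_fun measurableSet_Ioc fun t ht => ?_
    push_cast
    ring
  rw [hcombine]
  -- final bound
  have hFd_norm : ∀ t ∈ Set.Ioc (1:ℝ) X, ‖Fd fhat L z t‖ ≤ (M₀ + M₁) * Real.exp A / L * t⁻¹ := by
    intro t ht
    have ht1 : (1:ℝ) < t := ht.1
    have htX : t ≤ X := ht.2
    have ht0 : (0:ℝ) < t := lt_trans one_pos ht1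
    have hre : ∀ w : ℂ, ‖((t:ℝ):ℂ) ^ w‖ = t ^ w.re := fun w => by
      rw [Complex.norm_cpow_eq_rpow_re_of_pos ht0]
    have hz_re : -z.re ≤ 1 / L := by
      have h1 : |z.re| ≤ ‖z‖ := Complex.abs_re_le_norm z
      have h2 : -z.re ≤ |z.re| := neg_le_abs _
      linarith
    have hXL : X ^ (1/L) = Real.exp A := by
      rw [hXdef, ← Real.exp_mul]
      congr 1
      field_simp
    have hpow1 : t ^ (-z.re) ≤ Real.exp A := by
      calc t ^ (-z.re) ≤ t ^ (1/L) := Real.rpow_le_rpow_of_exponent_le ht1.le hz_re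
        _ ≤ X ^ (1/L) := Real.rpow_le_rpow ht0.le htX (by positivity)
        _ = Real.exp A := hXL
    have hpow2 : t ^ ((-z).re - 1) ≤ Real.exp A * t⁻¹ := by
      rw [Real.rpow_sub ht0, Real.rpow_one, div_eq_mul_inv]
      have : t ^ (-z).re = t ^ (-z.re) := by norm_num
      rw [this]
      exact mul_le_mul_of_nonneg_right hpow1 (by positivity)
    have hterm1 : ‖((deriv fhat (Real.log t / L) * (1/(t*L)) : ℝ) : ℂ) * ((t:ℝ):ℂ) ^ (-z)‖
        ≤ M₁ * (1/(t*L)) * Real.exp A := by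
      rw [norm_mul, Complex.norm_real, Real.norm_eq_abs, abs_mul,
        abs_of_pos (show (0:ℝ) < 1/(t*L) by positivity), hre]
      have hzre : (-z).re = -z.re := by norm_num
      rw [hzre]
      have hd := hM₁ (Real.log t / L)
      rw [Real.norm_eq_abs] at hd
      gcongr
    have hterm2 : ‖((fhat (Real.log t / L) : ℝ) : ℂ) * (-z * ((t:ℝ):ℂ) ^ (-z-1))‖
        ≤ M₀ * ((1/L) * (Real.exp A * t⁻¹)) := by
      rw [norm_mul, norm_mul, norm_neg, Complex.norm_real, Real.norm_eq_abs, hre]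
      have hf0 := hM₀ (Real.log t / L)
      rw [Real.norm_eq_abs] at hf0
      have hre2 : (-z-1).re = (-z).re - 1 := by simp
      rw [hre2]
      gcongr
    calc ‖Fd fhat L z t‖ ≤ M₁ * (1/(t*L)) * Real.exp A + M₀ * ((1/L) * (Real.exp A * t⁻¹)) := by
          refine le_trans (norm_add_le _ _) ?_
          exact add_le_add hterm1 hterm2
      _ = (M₀ + M₁) * Real.exp A / L * t⁻¹ := by
          field_simp
          ring
  have hE : ∀ t ∈ Set.Ioc (1:ℝ) X, |Real.log t - Phi ⌊t⌋₊| ≤ C₀ + 1 := by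
    intro t ht
    have ht1 : (1:ℝ) < t := ht.1
    have ht0 : (0:ℝ) < t := lt_trans one_pos ht1
    have hn1 : 1 ≤ ⌊t⌋₊ := Nat.le_floor (by exact_mod_cast ht1.le)
    have hn0 : (0:ℝ) < (⌊t⌋₊ : ℝ) := by exact_mod_cast hn1
    have hnt : ((⌊t⌋₊ : ℕ) : ℝ) ≤ t := Nat.floor_le ht0.le
    have htn : t < (⌊t⌋₊ : ℝ) + 1 := Nat.lt_floor_add_one t
    have hlog1 : Real.log (⌊t⌋₊ : ℝ) ≤ Real.log t := Real.log_le_log hn0 hnt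
    have hlog2 : Real.log t - Real.log (⌊t⌋₊ : ℝ) ≤ 1 := by
      rw [← Real.log_div ht0.ne' hn0.ne']
      have h1 : t / (⌊t⌋₊ : ℝ) ≤ 1 + 1/(⌊t⌋₊:ℝ) := by
        rw [div_le_iff₀ hn0]
        have : (1:ℝ) ≤ (⌊t⌋₊:ℝ) := by exact_mod_cast hn1
        field_simp
        nlinarith
      have h2 := Real.log_le_sub_one_of_pos (show (0:ℝ) < t / (⌊t⌋₊:ℝ) by positivity)
      have h3 : (1:ℝ)/(⌊t⌋₊:ℝ) ≤ 1 := by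
        rw [div_le_one hn0]
        exact_mod_cast hn1
      linarith
    have hm := abs_le.mp (hC₀ ⌊t⌋₊ hn1)
    rw [abs_le]
    constructor <;> [nlinarith [hm.1, hm.2]; nlinarith [hm.1, hm.2]]
  set B : ℝ := (C₀ + 1) * ((M₀ + M₁) * Real.exp A / L) with hBdef
  have hB0 : 0 ≤ B := by
    rw [hBdef]
    positivity
  have hptbound : ∀ t ∈ Set.Ioc (1:ℝ) X,
      ‖deriv F t * ((Real.log t - Phi ⌊t⌋₊ : ℝ) : ℂ)‖ ≤ B * t⁻¹ := by
    intro t ht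
    have ht0 : (0:ℝ) < t := lt_trans one_pos ht.1
    rw [norm_mul, Complex.norm_real, Real.norm_eq_abs, hderivF t ht0]
    calc ‖Fd fhat L z t‖ * |Real.log t - Phi ⌊t⌋₊|
        ≤ ((M₀ + M₁) * Real.exp A / L * t⁻¹) * (C₀ + 1) := by
          refine mul_le_mul (hFd_norm t ht) (hE t ht) (abs_nonneg _) ?_
          positivity
      _ = B * t⁻¹ := by rw [hBdef]; ring
  have hBint : Integrable (fun t : ℝ => B * t⁻¹) (volume.restrict (Set.Ioc 1 X)) := by
    have : ContinuousOn (fun t : ℝ => B * t⁻¹) (Set.Icc 1 X) := by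
      apply continuousOn_const.mul
      exact ContinuousOn.inv₀ continuousOn_id (fun t ht => ne_of_gt (hsub1X ht))
    exact (this.integrableOn_Icc).mono_set Set.Ioc_subset_Icc_self
  have hnormle : ‖∫ t in Set.Ioc (1:ℝ) X, deriv F t * ((Real.log t - Phi ⌊t⌋₊ : ℝ) : ℂ)‖
      ≤ ∫ t in Set.Ioc (1:ℝ) X, B * t⁻¹ := by
    refine norm_integral_le_of_norm_le hBint ?_
    rw [ae_restrict_iff' measurableSet_Ioc]
    exact Filter.Eventually.of_forall hptbound
  have hBval : ∫ t in Set.Ioc (1:ℝ) X, B * t⁻¹ = B * (A * L) := by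
    rw [← intervalIntegral.integral_of_le hX1.le, intervalIntegral.integral_const_mul,
      integral_inv (by rw [Set.uIcc_of_le hX1.le]; intro h; exact absurd h.1 (by norm_num))]
    rw [div_one, hlogX]
  rw [hBval] at hnormle
  refine le_trans hnormle ?_
  rw [hBdef]
  have : (C₀ + 1) * ((M₀ + M₁) * Real.exp A / L) * (A * L)
      = (C₀ + 1) * ((M₀ + M₁) * Real.exp A * A) := by
    field_simp
  rw [this]
end
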